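/- arXiv:2403.17663 — 6 statements merged into one kernel-verified Lean document; each statement's English description precedes it below -/
import Mathlib

section
/- For every killing rate κ > 0 and every integer N ≥ 1, the partial sum of the Green's function series satisfies Σ_{n=0}^{N−1} (4+κ)^{−2n} W_{2n}^{o,o} ≥ 1 + (log N)/π − Nκ/π − 1/(3π). -/
open scoped Real

/-- Graph (L¹) distance of `x ∈ ℤ²` from the origin: `|x₁| + |x₂|`. -/
def gnorm (x : ℤ × ℤ) : ℕ := x.1.natAbs + x.2.natAbs

/-- `W n x` is the number of nearest-neighbour walks of length `n` in `ℤ²`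
from the origin `o = (0,0)` to `x`, i.e. the number of sequences
`(v₀, …, v_n)` with `v₀ = o`, `v_n = x` and `|v_{i+1} − v_i| = 1` for all `i`. -/
noncomputable def W (n : ℕ) (x : ℤ × ℤ) : ℕ :=
  Set.ncard {v : Fin (n + 1) → ℤ × ℤ |
    v 0 = (0, 0) ∧ v (Fin.last n) = x ∧
    ∀ i : Fin n, gnorm (v i.succ - v i.castSucc) = 1}

/-- The Green's function `G^{o,x}` of the simple random walk on `ℤ²` with
killing rate `κ`: `G κ x = Σ_{n≥0} (4+κ)^{-n} W_n^{o,x}`. -/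
noncomputable def G (κ : ℝ) (x : ℤ × ℤ) : ℝ :=
  ∑' n : ℕ, (1 / (4 + κ)) ^ n * (W n x : ℝ)

/-!
Rotating `ℤ²` by 45° turns a closed walk of length `2n` into a pair of `±1` walks of length `2n`
returning to `0`, so `W_{2n}^{o,o} ≥ binom(2n, n)²`, and Wallis' inequality gives
`binom(2n, n)² ≥ 2 · 16ⁿ / (π (2n + 1))`. By Bernoulli, `(4 / (4 + κ))^{2n} ≥ 1 - nκ/2`, so the
`n`-th term is at least `2 / (π (2n + 1)) - κ / (2π)`. Finally
`Σ_{n=1}^{N-1} 2 / (2n + 1) ≥ log N - 1/3` follows from `log (1 + x) ≤ x - x²/2 + x³/3`.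
-/

open Finset Real
open scoped Nat

lemma Fin.partialSum_last {M : Type*} [AddCommMonoid M] {n : ℕ} (f : Fin n → M) :
    Fin.partialSum f (Fin.last n) = ∑ i, f i := by
  simp [Fin.partialSum, List.take_of_length_le, List.sum_ofFn]

lemma Fin.partialSum_injective {G : Type*} [AddGroup G] (n : ℕ) :
    Function.Injective (Fin.partialSum : (Fin n → G) → Fin (n + 1) → G) := by
  intro s t h
  funext i
  rw [← Fin.partialSum_right_neg s, ← Fin.partialSum_right_neg t, h]

def unitStepSeqs (m : ℕ) (x : ℤ × ℤ) : Set (Fin m → ℤ × ℤ) :=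
  {s | (∀ i, gnorm (s i) = 1) ∧ ∑ i, s i = x}

lemma walks_eq_image_partialSum (m : ℕ) (x : ℤ × ℤ) :
    {v : Fin (m + 1) → ℤ × ℤ | v 0 = (0, 0) ∧ v (Fin.last m) = x ∧
      ∀ i : Fin m, gnorm (v i.succ - v i.castSucc) = 1}
      = Fin.partialSum '' unitStepSeqs m x := by
  ext v
  constructor
  · rintro ⟨h0, hx, hstep⟩
    have hv : Fin.partialSum (fun i => -v i.castSucc + v i.succ) = v := by
      simpa [h0, ← Prod.zero_eq_mk] using Fin.partialSum_left_neg v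
    refine ⟨_, ⟨fun i => ?_, ?_⟩, hv⟩
    · simpa [neg_add_eq_sub] using hstep i
    · rw [← Fin.partialSum_last, hv, hx]
  · rintro ⟨s, ⟨hs, hsum⟩, rfl⟩
    refine ⟨Fin.partialSum_zero s, by rw [Fin.partialSum_last, hsum], fun i => ?_⟩
    rw [← neg_add_eq_sub, Fin.partialSum_right_neg, hs]

lemma W_eq_ncard_unitStepSeqs (m : ℕ) (x : ℤ × ℤ) : W m x = (unitStepSeqs m x).ncard := by
  rw [W, walks_eq_image_partialSum, Set.ncard_image_of_injective _ (Fin.partialSum_injective m)]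

lemma unitStepSeqs_finite (m : ℕ) (x : ℤ × ℤ) : (unitStepSeqs m x).Finite := by
  have hunit : {u : ℤ × ℤ | gnorm u = 1}.Finite := by
    refine (Set.finite_Icc (-1, -1) (1, 1)).subset fun u hu => ?_
    have : u.1.natAbs + u.2.natAbs = 1 := hu
    simp only [Set.mem_Icc, Prod.le_def]
    omega
  exact (Set.Finite.pi (t := fun _ : Fin m => _) fun _ => hunit).subset
    fun s hs i _ => hs.1 i

/-- The unit step whose rotated coordinates `(x + y, x - y)` are `(±1, ±1)`, with signs read off
`a` and `b`. -/
def diagStep : Bool → Bool → ℤ × ℤ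
  | true, true => (1, 0)
  | true, false => (0, 1)
  | false, true => (0, -1)
  | false, false => (-1, 0)

lemma gnorm_diagStep (a b : Bool) : gnorm (diagStep a b) = 1 := by
  cases a <;> cases b <;> rfl

lemma diagStep_inj {a b a' b' : Bool} : diagStep a b = diagStep a' b' ↔ a = a' ∧ b = b' := by
  cases a <;> cases b <;> cases a' <;> cases b' <;> decide

lemma diagStep_fst_add_snd (a b : Bool) :
    (diagStep a b).1 + (diagStep a b).2 = if a then 1 else -1 := by
  cases a <;> cases b <;> rfl

lemma diagStep_fst_sub_snd (a b : Bool) :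
    (diagStep a b).1 - (diagStep a b).2 = if b then 1 else -1 := by
  cases a <;> cases b <;> rfl

lemma sum_ite_mem_one_neg_one {α : Type*} [Fintype α] [DecidableEq α] (A : Finset α) :
    ∑ j, (if j ∈ A then (1 : ℤ) else -1) = 2 * #A - Fintype.card α := by
  rw [sum_ite, sum_const, sum_const, filter_mem_eq_inter, univ_inter, filter_not,
    filter_mem_eq_inter, univ_inter, card_sdiff_of_subset (subset_univ A), card_univ]
  simp only [nsmul_eq_mul, mul_one, mul_neg]
  push_cast [card_le_univ]
  ring

def diagSteps {m : ℕ} (A B : Finset (Fin m)) : Fin m → ℤ × ℤ :=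
  fun j => diagStep (decide (j ∈ A)) (decide (j ∈ B))

lemma diagSteps_injective {m : ℕ} : Function.Injective fun p : Finset (Fin m) × Finset (Fin m) =>
    diagSteps p.1 p.2 := by
  rintro ⟨A, B⟩ ⟨A', B'⟩ h
  have hj (j : Fin m) := diagStep_inj.mp (congrFun h j)
  simp only [decide_eq_decide] at hj
  simp only [Prod.mk.injEq, Finset.ext_iff]
  exact ⟨fun j => (hj j).1, fun j => (hj j).2⟩

lemma diagSteps_mem_unitStepSeqs {m : ℕ} {A B : Finset (Fin m)} (hA : 2 * #A = m)
    (hB : 2 * #B = m) : diagSteps A B ∈ unitStepSeqs m 0 := by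
  refine ⟨fun j => gnorm_diagStep _ _, ?_⟩
  set S := ∑ j, diagSteps A B j
  have hadd : S.1 + S.2 = 0 := by
    simp only [S, diagSteps, Prod.fst_sum, Prod.snd_sum, ← Finset.sum_add_distrib,
      diagStep_fst_add_snd, decide_eq_true_eq, sum_ite_mem_one_neg_one, Fintype.card_fin]
    omega
  have hsub : S.1 - S.2 = 0 := by
    simp only [S, diagSteps, Prod.fst_sum, Prod.snd_sum, ← Finset.sum_sub_distrib,
      diagStep_fst_sub_snd, decide_eq_true_eq, sum_ite_mem_one_neg_one, Fintype.card_fin]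
    omega
  exact Prod.ext (by rw [Prod.fst_zero]; omega) (by rw [Prod.snd_zero]; omega)

lemma centralBinom_sq_le_W (n : ℕ) : n.centralBinom ^ 2 ≤ W (2 * n) (0, 0) := by
  let D : Finset (Finset (Fin (2 * n)) × Finset (Fin (2 * n))) :=
    powersetCard n univ ×ˢ powersetCard n univ
  have hmaps : ∀ p ∈ (↑D : Set (Finset (Fin (2 * n)) × Finset (Fin (2 * n)))),
      diagSteps p.1 p.2 ∈ unitStepSeqs (2 * n) 0 := by
    intro p hp
    simp only [D, coe_product, Set.mem_prod, mem_coe, mem_powersetCard_univ] at hp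
    exact diagSteps_mem_unitStepSeqs (by rw [hp.1]) (by rw [hp.2])
  have hcard := Set.ncard_le_ncard_of_injOn _ hmaps diagSteps_injective.injOn
    (unitStepSeqs_finite _ _)
  rw [Set.ncard_coe_finset, card_product, card_powersetCard, card_univ, Fintype.card_fin,
    ← Nat.centralBinom_eq_two_mul_choose, ← sq] at hcard
  rwa [W_eq_ncard_unitStepSeqs, Prod.mk_zero_zero]

lemma two_mul_sixteen_pow_div_le_centralBinom_sq (n : ℕ) :
    2 * 16 ^ n / (π * (2 * n + 1)) ≤ (n.centralBinom : ℝ) ^ 2 := by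
  have hfact : (n.centralBinom : ℝ) * n ! * n ! = (2 * n)! := by
    have := Nat.choose_mul_factorial_mul_factorial (Nat.le_mul_of_pos_left n two_pos)
    rw [two_mul, Nat.add_sub_cancel] at this
    exact_mod_cast two_mul n ▸ this
  have hcb : (0 : ℝ) < n.centralBinom := by exact_mod_cast n.centralBinom_pos
  have hwallis := Wallis.W_le n
  rw [Wallis.W_eq_factorial_ratio, ← hfact, pow_mul, div_le_iff₀ (by positivity)] at hwallis
  rw [div_le_iff₀ (by positivity)]
  have : (0 : ℝ) < n ! ^ 4 := by positivity
  nlinarith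

lemma log_one_add_le {x : ℝ} (hx : 0 ≤ x) : log (1 + x) ≤ x - x ^ 2 / 2 + x ^ 3 / 3 := by
  let f : ℝ → ℝ := fun t => t - t ^ 2 / 2 + t ^ 3 / 3 - log (1 + t)
  have hderiv : ∀ t, 0 ≤ t → HasDerivAt f (t ^ 3 / (1 + t)) t := by
    intro t ht
    have hpos : 0 < 1 + t := by linarith
    refine ((((hasDerivAt_id t).sub ((hasDerivAt_pow 2 t).div_const 2)).add
      ((hasDerivAt_pow 3 t).div_const 3)).sub
        (((hasDerivAt_id t).const_add 1).log hpos.ne')).congr_deriv ?_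
    simp only [id]
    field_simp
    ring
  have hmono : MonotoneOn f (Set.Ici 0) := by
    refine monotoneOn_of_hasDerivWithinAt_nonneg (f' := fun t => t ^ 3 / (1 + t)) (convex_Ici 0)
      (fun t ht => (hderiv t ht).continuousAt.continuousWithinAt)
      (fun t ht => ?_) (fun t ht => ?_)
    all_goals rw [interior_Ici] at ht
    · exact (hderiv t (le_of_lt ht)).hasDerivWithinAt
    · have : 0 < t := ht
      positivity
  have := hmono Set.self_mem_Ici hx hx
  simp only [f] at this
  norm_num at this
  linarith

lemma log_one_add_inv_le {t : ℝ} (ht : 1 ≤ t) :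
    log (1 + t⁻¹) ≤ 2 / (2 * t + 1) + 1 / (3 * t) - 1 / (3 * (t + 1)) := by
  have ht0 : 0 < t := by linarith
  refine (log_one_add_le (inv_nonneg.mpr ht0.le)).trans ?_
  rw [← sub_nonneg]
  have key : 2 / (2 * t + 1) + 1 / (3 * t) - 1 / (3 * (t + 1)) - (t⁻¹ - t⁻¹ ^ 2 / 2 + t⁻¹ ^ 3 / 3)
      = (t - 1) * (4 * t ^ 2 + 5 * t + 2) / (6 * t ^ 3 * (t + 1) * (2 * t + 1)) := by
    field_simp
    ring
  rw [key]
  have : 0 ≤ t - 1 := by linarith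
  positivity

lemma log_add_one_le_sum (M : ℕ) :
    log (M + 1) + 1 / (3 * (M + 1)) - 1 / 3 ≤ ∑ i ∈ range M, 2 / (2 * ((i : ℝ) + 1) + 1) := by
  induction M with
  | zero => norm_num
  | succ M ih =>
    have hM : (1 : ℝ) ≤ M + 1 := by linarith [M.cast_nonneg (α := ℝ)]
    have hlog : log ((M : ℝ) + 1 + 1) = log (M + 1) + log (1 + ((M : ℝ) + 1)⁻¹) := by
      rw [← log_mul (by positivity) (by positivity)]
      congr 1
      field_simp
    rw [sum_range_succ]
    push_cast
    linarith [log_one_add_inv_le hM]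

lemma one_sub_mul_div_le_div_add_pow {a x : ℝ} (ha : 0 < a) (hx : 0 ≤ x) (m : ℕ) :
    1 - m * x / a ≤ (a / (a + x)) ^ m := by
  have hax : 0 < a + x := by linarith
  have hrel : x / (a + x) ≤ x / a := div_le_div_of_nonneg_left hx ha (by linarith)
  have hle1 : x / (a + x) ≤ 1 := (div_le_one hax).mpr (by linarith)
  calc 1 - m * x / a ≤ 1 + m * -(x / (a + x)) := by
        rw [mul_neg, ← sub_eq_add_neg, mul_div_assoc]
        gcongr
    _ ≤ (1 + -(x / (a + x))) ^ m := one_add_mul_le_pow (by linarith) m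
    _ = (a / (a + x)) ^ m := by
        congr 1
        field_simp
        ring

lemma two_div_sub_le_weighted_W {κ : ℝ} (hκ : 0 ≤ κ) (n : ℕ) :
    2 / (2 * n + 1) / π - κ / (2 * π) ≤ (1 / (4 + κ)) ^ (2 * n) * (W (2 * n) (0, 0) : ℝ) := by
  have hW : (n.centralBinom : ℝ) ^ 2 ≤ W (2 * n) (0, 0) := by exact_mod_cast centralBinom_sq_le_W n
  have hdecay := one_sub_mul_div_le_div_add_pow four_pos hκ (2 * n)
  have hpow : (1 / (4 + κ)) ^ (2 * n) * 16 ^ n = (4 / (4 + κ)) ^ (2 * n) := by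
    rw [pow_mul, pow_mul, ← mul_pow]
    congr 1
    field_simp
    norm_num
  calc 2 / (2 * n + 1) / π - κ / (2 * π)
      ≤ (1 - (2 * n : ℕ) * κ / 4) * (2 / (π * (2 * n + 1))) := by
        rw [← sub_nonneg]
        have key : (1 - (2 * n : ℕ) * κ / 4) * (2 / (π * (2 * n + 1)))
            - (2 / (2 * n + 1) / π - κ / (2 * π)) = κ / (2 * π * (2 * n + 1)) := by
          push_cast
          field_simp
          ring
        rw [key]
        positivity
    _ ≤ (1 / (4 + κ)) ^ (2 * n) * 16 ^ n * (2 / (π * (2 * n + 1))) := by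
        rw [hpow]
        exact mul_le_mul_of_nonneg_right hdecay (by positivity)
    _ = (1 / (4 + κ)) ^ (2 * n) * (2 * 16 ^ n / (π * (2 * n + 1))) := by ring
    _ ≤ (1 / (4 + κ)) ^ (2 * n) * (W (2 * n) (0, 0) : ℝ) := by
        gcongr
        exact (two_mul_sixteen_pow_div_le_centralBinom_sq n).trans hW

/-- Lemma 3.2, eq. (3.5): lower bound on partial sums of the Green's function series. -/
theorem stmt1 (κ : ℝ) (hκ : 0 < κ) (N : ℕ) (hN : 1 ≤ N) :
    1 + Real.log N / π - N * κ / π - 1 / (3 * π)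
      ≤ ∑ n ∈ Finset.range N, (1 / (4 + κ)) ^ (2 * n) * (W (2 * n) (0, 0) : ℝ) := by
  obtain ⟨M, rfl⟩ : ∃ M, N = M + 1 := ⟨N - 1, by omega⟩
  have hW0 : (1 : ℝ) ≤ W 0 (0, 0) := by exact_mod_cast centralBinom_sq_le_W 0
  have hterms := sum_le_sum fun i (_ : i ∈ range M) => two_div_sub_le_weighted_W hκ.le (i + 1)
  rw [sum_sub_distrib, ← sum_div, sum_const, card_range, nsmul_eq_mul] at hterms
  push_cast at hterms
  set S := ∑ i ∈ range M, 2 / (2 * ((i : ℝ) + 1) + 1)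
  have hharmonic : log (M + 1) - (M + 1) * κ - 1 / 3 ≤ S - M * κ / 2 := by
    have : 0 < 1 / (3 * ((M : ℝ) + 1)) := by positivity
    linarith [log_add_one_le_sum M, mul_nonneg M.cast_nonneg hκ.le]
  calc 1 + log ((M + 1 : ℕ) : ℝ) / π - ((M + 1 : ℕ) : ℝ) * κ / π - 1 / (3 * π)
      = 1 + (log (M + 1) - (M + 1) * κ - 1 / 3) / π := by push_cast; ring
    _ ≤ 1 + (S - M * κ / 2) / π := by gcongr
    _ = 1 + (S / π - M * (κ / (2 * π))) := by ring
    _ ≤ _ := by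
        rw [sum_range_succ']
        simp only [mul_zero, pow_zero, one_mul]
        linarith
end

section
/- For every killing rate κ > 0, the Green's function at the origin satisfies G^{o,o} ≥ (log κ^{−1})/π + 1 − 4/(3π). -/
open scoped Real

namespace SRW

def walkSet (n : ℕ) (x : ℤ × ℤ) : Set (Fin (n + 1) → ℤ × ℤ) :=
  {v | v 0 = (0, 0) ∧ v (Fin.last n) = x ∧
    ∀ i : Fin n, gnorm (v i.succ - v i.castSucc) = 1}

lemma W_eq (n : ℕ) (x : ℤ × ℤ) : W n x = (walkSet n x).ncard := rfl

def stepsOf {n : ℕ} (v : Fin (n + 1) → ℤ × ℤ) : Fin n → ℤ × ℤ :=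
  fun i => v i.succ - v i.castSucc

lemma walk_ext {n : ℕ} {v w : Fin (n + 1) → ℤ × ℤ} (h0 : v 0 = w 0)
    (hs : stepsOf v = stepsOf w) : v = w := by
  funext k
  induction k using Fin.induction with
  | zero => exact h0
  | succ i ih =>
      have h := congrFun hs i
      simp only [stepsOf, ih] at h
      exact sub_left_inj.mp h

def Dfin : Finset (ℤ × ℤ) := {(1, 0), (-1, 0), (0, 1), (0, -1)}

lemma mem_Dfin {y : ℤ × ℤ} : y ∈ Dfin ↔ gnorm y = 1 := by
  rcases y with ⟨a, b⟩
  simp only [Dfin, Finset.mem_insert, Finset.mem_singleton, Prod.mk.injEq, gnorm]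
  omega

lemma stepsOf_mapsTo {n : ℕ} {x : ℤ × ℤ} :
    Set.MapsTo stepsOf (walkSet n x)
      (↑(Fintype.piFinset fun _ : Fin n => Dfin) : Set (Fin n → ℤ × ℤ)) := by
  intro v hv
  simp only [Finset.coe_sort_coe, Set.mem_setOf_eq, Finset.mem_coe, Fintype.mem_piFinset]
  intro i
  exact mem_Dfin.mpr (hv.2.2 i)

lemma stepsOf_injOn {n : ℕ} {x : ℤ × ℤ} : Set.InjOn stepsOf (walkSet n x) :=
  fun _ hv _ hw h => walk_ext (hv.1.trans hw.1.symm) h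

lemma walkSet_finite (n : ℕ) (x : ℤ × ℤ) : (walkSet n x).Finite :=
  Set.Finite.of_finite_image
    ((Fintype.piFinset fun _ : Fin n => Dfin).finite_toSet.subset
      stepsOf_mapsTo.image_subset) stepsOf_injOn

lemma W_le_four_pow (n : ℕ) (x : ℤ × ℤ) : W n x ≤ 4 ^ n := by
  rw [W_eq]
  calc (walkSet n x).ncard
      ≤ (↑(Fintype.piFinset fun _ : Fin n => Dfin) : Set (Fin n → ℤ × ℤ)).ncard :=
        Set.ncard_le_ncard_of_injOn stepsOf stepsOf_mapsTo stepsOf_injOn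
          (Fintype.piFinset _).finite_toSet
    _ = 4 ^ n := by
        rw [Set.ncard_coe_finset, Fintype.card_piFinset]
        simp [Dfin]

section PhiDef
variable (n : ℕ)

def stp (A B : Finset (Fin (2 * n))) (i : ℕ) : ℤ × ℤ :=
  if h : i < 2 * n then
    ((if (⟨i, h⟩ : Fin (2 * n)) ∈ A then 1 else 0) +
       (if (⟨i, h⟩ : Fin (2 * n)) ∈ B then 1 else 0) - 1,
     (if (⟨i, h⟩ : Fin (2 * n)) ∈ A then 1 else 0) -
       (if (⟨i, h⟩ : Fin (2 * n)) ∈ B then 1 else 0))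
  else (1, 0)

lemma gnorm_stp (A B : Finset (Fin (2 * n))) (i : ℕ) : gnorm (stp n A B i) = 1 := by
  unfold stp
  split
  · next h =>
      by_cases hA : (⟨i, h⟩ : Fin (2 * n)) ∈ A <;>
      by_cases hB : (⟨i, h⟩ : Fin (2 * n)) ∈ B <;>
      simp [gnorm, hA, hB]
  · simp [gnorm]

lemma stp_of_lt (A B : Finset (Fin (2 * n))) (i : Fin (2 * n)) :
    stp n A B i.val =
      ((if i ∈ A then 1 else 0) + (if i ∈ B then 1 else 0) - 1,
       (if i ∈ A then 1 else 0) - (if i ∈ B then 1 else 0)) := by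
  unfold stp
  rw [dif_pos i.isLt]

lemma mem_A_iff (A B : Finset (Fin (2 * n))) (i : Fin (2 * n)) :
    i ∈ A ↔ (stp n A B i.val).1 + (stp n A B i.val).2 = 1 := by
  rw [stp_of_lt]
  by_cases hA : i ∈ A <;> by_cases hB : i ∈ B <;> simp [hA, hB]

lemma mem_B_iff (A B : Finset (Fin (2 * n))) (i : Fin (2 * n)) :
    i ∈ B ↔ (stp n A B i.val).1 - (stp n A B i.val).2 = 1 := by
  rw [stp_of_lt]
  by_cases hA : i ∈ A <;> by_cases hB : i ∈ B <;> simp [hA, hB]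

def Phi (A B : Finset (Fin (2 * n))) : Fin (2 * n + 1) → ℤ × ℤ :=
  fun k => ∑ i ∈ Finset.range k.val, stp n A B i

lemma Phi_zero (A B : Finset (Fin (2 * n))) : Phi n A B 0 = (0, 0) := by
  simp [Phi, Prod.ext_iff]

lemma Phi_step (A B : Finset (Fin (2 * n))) (k : Fin (2 * n)) :
    Phi n A B k.succ - Phi n A B k.castSucc = stp n A B k.val := by
  simp only [Phi, Fin.val_succ, Fin.coe_castSucc, Finset.sum_range_succ]
  abel

lemma Phi_last (A B : Finset (Fin (2 * n))) (hA : A.card = n) (hB : B.card = n) :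
    Phi n A B (Fin.last (2 * n)) = (0, 0) := by
  have h : Phi n A B (Fin.last (2 * n)) = ∑ i : Fin (2 * n), stp n A B i.val := by
    rw [Phi, Fin.val_last, ← Fin.sum_univ_eq_sum_range]
  rw [h]
  simp only [stp_of_lt n A B]
  rw [Prod.ext_iff]
  constructor
  · simp only [Prod.fst_sum, Finset.sum_sub_distrib, Finset.sum_add_distrib,
      Finset.sum_ite_mem, Finset.univ_inter, Finset.sum_const, nsmul_eq_mul, mul_one,
      hA, hB, Finset.card_univ, Fintype.card_fin]
    push_cast
    ring
  · simp only [Prod.snd_sum, Finset.sum_sub_distrib,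
      Finset.sum_ite_mem, Finset.univ_inter, Finset.sum_const, nsmul_eq_mul, mul_one, hA, hB]
    ring

lemma Phi_inj : Set.InjOn (fun p : Finset (Fin (2 * n)) × Finset (Fin (2 * n)) => Phi n p.1 p.2)
    Set.univ := by
  rintro ⟨A, B⟩ - ⟨A', B'⟩ - h
  simp only at h
  have hstp : ∀ k : Fin (2 * n), stp n A B k.val = stp n A' B' k.val := by
    intro k
    rw [← Phi_step n A B k, ← Phi_step n A' B' k, h]
  have hA : A = A' := by
    ext i; rw [mem_A_iff n A B i, mem_A_iff n A' B' i, hstp i]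
  have hB : B = B' := by
    ext i; rw [mem_B_iff n A B i, mem_B_iff n A' B' i, hstp i]
  rw [Prod.ext_iff]; exact ⟨hA, hB⟩

end PhiDef

lemma centralBinom_sq_le_W (n : ℕ) : Nat.centralBinom n ^ 2 ≤ W (2 * n) (0, 0) := by
  classical
  set P : Finset (Finset (Fin (2 * n)) × Finset (Fin (2 * n))) :=
    Finset.powersetCard n Finset.univ ×ˢ Finset.powersetCard n Finset.univ with hP
  have himg : (fun p : Finset (Fin (2 * n)) × Finset (Fin (2 * n)) => Phi n p.1 p.2) '' ↑P ⊆
      walkSet (2 * n) (0, 0) := by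
    rintro v ⟨⟨A, B⟩, hp, rfl⟩
    rw [Finset.mem_coe, hP, Finset.mem_product, Finset.mem_powersetCard,
      Finset.mem_powersetCard] at hp
    refine ⟨Phi_zero n A B, Phi_last n A B hp.1.2 hp.2.2, fun k => ?_⟩
    have := Phi_step n A B k
    rw [show (Phi n A B k.succ - Phi n A B k.castSucc) = stp n A B k.val from this]
    exact gnorm_stp n A B k.val
  calc Nat.centralBinom n ^ 2 = P.card := by
        rw [hP, Finset.card_product, Finset.card_powersetCard, Finset.card_univ,
          Fintype.card_fin, Nat.centralBinom]
        ring
    _ = (↑P : Set (Finset (Fin (2 * n)) × Finset (Fin (2 * n)))).ncard :=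
        (Set.ncard_coe_finset P).symm
    _ = ((fun p : Finset (Fin (2 * n)) × Finset (Fin (2 * n)) => Phi n p.1 p.2) '' ↑P).ncard :=
        (Set.ncard_image_of_injOn ((Phi_inj n).mono (Set.subset_univ _))).symm
    _ ≤ (walkSet (2 * n) (0, 0)).ncard := Set.ncard_le_ncard himg (walkSet_finite _ _)
    _ = W (2 * n) (0, 0) := (W_eq _ _).symm

lemma centralBinom_identity (n : ℕ) :
    ((Nat.centralBinom n : ℝ)) ^ 2 * (2 * n + 1) * Real.Wallis.W n = 16 ^ n := by
  have h1 : (Nat.centralBinom n : ℝ) * (n.factorial : ℝ) ^ 2 = ((2 * n).factorial : ℝ) := by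
    have := Nat.choose_mul_factorial_mul_factorial (show n ≤ 2 * n by omega)
    rw [show 2 * n - n = n by omega] at this
    have : Nat.centralBinom n * n.factorial * n.factorial = (2 * n).factorial := this
    exact_mod_cast by push_cast [← this]; ring
  rw [Real.Wallis.W_eq_factorial_ratio]
  have h2 : ((2 * n).factorial : ℝ) ≠ 0 := by positivity
  have h3 : (2 * (n : ℝ) + 1) ≠ 0 := by positivity
  have h16 : (16 : ℝ) ^ n = 2 ^ (4 * n) := by
    rw [pow_mul]; norm_num
  field_simp
  rw [h16, ← h1]
  ring

lemma centralBinom_sq_lower (n : ℕ) :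
    2 * 16 ^ n / (π * (2 * n + 1)) ≤ ((Nat.centralBinom n : ℝ)) ^ 2 := by
  have hW := Real.Wallis.W_le n
  have hWpos := Real.Wallis.W_pos n
  have hid := centralBinom_identity n
  have h1 : (0:ℝ) < 2 * n + 1 := by positivity
  have hC : ((Nat.centralBinom n : ℝ)) ^ 2 = 16 ^ n / ((2 * n + 1) * Real.Wallis.W n) := by
    field_simp
    linarith [hid]
  rw [hC]
  rw [div_le_div_iff₀ (by positivity) (by positivity)]
  have h16 : (0:ℝ) < 16 ^ n := by positivity
  nlinarith [mul_le_mul_of_nonneg_left hW (le_of_lt h16)]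

end SRW

/-- Lemma 3.2, eq. (3.6): `G^{o,o} ≥ (log κ⁻¹)/π + 1 − 4/(3π)`. -/
theorem stmt2 (κ : ℝ) (hκ : 0 < κ) :
    Real.log κ⁻¹ / π + 1 - 4 / (3 * π) ≤ G κ (0, 0) := by
  show Real.log κ⁻¹ / π + 1 - 4 / (3 * π) ≤ ∑' n : ℕ, (1 / (4 + κ)) ^ n * (W n (0, 0) : ℝ)
  have hπ : (0:ℝ) < π := Real.pi_pos
  set q : ℝ := 1 / (4 + κ) with hq
  have h4κ : (0:ℝ) < 4 + κ := by linarith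
  have hq0 : 0 < q := by positivity
  have hq4 : 4 * q < 1 := by
    rw [hq, mul_one_div, div_lt_one h4κ]; linarith
  set t : ℝ := (4 * q) ^ 2 with ht
  have ht0 : 0 < t := by positivity
  have ht1 : t < 1 := by nlinarith
  have hqt : ∀ n : ℕ, q ^ (2 * n) * 16 ^ n = t ^ n := by
    intro n
    rw [ht, show ((4 * q) ^ 2) = 16 * q ^ 2 by ring, mul_pow, pow_mul]
    ring
  -- the three series
  set f : ℕ → ℝ := fun n => q ^ n * (W n (0, 0) : ℝ) with hf
  have hf_nonneg : ∀ n, 0 ≤ f n := fun n => mul_nonneg (by positivity) (Nat.cast_nonneg _)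
  have hf_le : ∀ n, f n ≤ (4 * q) ^ n := by
    intro n
    have hWle : ((W n (0, 0) : ℝ)) ≤ 4 ^ n := by exact_mod_cast SRW.W_le_four_pow n (0, 0)
    calc f n ≤ q ^ n * 4 ^ n := mul_le_mul_of_nonneg_left hWle (by positivity)
      _ = (4 * q) ^ n := by rw [mul_pow]; ring
  have hsum_f : Summable f :=
    Summable.of_nonneg_of_le hf_nonneg hf_le
      (summable_geometric_of_lt_one (by positivity) hq4)
  set g : ℕ → ℝ := fun n => q ^ (2 * n) * ((Nat.centralBinom n : ℝ)) ^ 2 with hg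
  have hg_le : ∀ n, g n ≤ f (2 * n) := fun n =>
    mul_le_mul_of_nonneg_left
      (by exact_mod_cast SRW.centralBinom_sq_le_W n) (by positivity)
  have hg_nonneg : ∀ n, 0 ≤ g n := fun n => by positivity
  have hg_le_t : ∀ n, g n ≤ t ^ n := by
    intro n
    calc g n ≤ f (2 * n) := hg_le n
      _ ≤ (4 * q) ^ (2 * n) := hf_le _
      _ = t ^ n := by rw [ht, pow_mul]
  have hsum_t : Summable (fun n : ℕ => t ^ n) :=
    summable_geometric_of_lt_one ht0.le ht1
  have hsum_g : Summable g := Summable.of_nonneg_of_le hg_nonneg hg_le_t hsum_t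
  have hfg : ∑' n, g n ≤ ∑' n, f n := by
    apply Summable.tsum_le_tsum_of_inj (fun n => 2 * n) (fun a b hab => by dsimp at hab; omega)
      (fun c _ => hf_nonneg c) hg_le hsum_g hsum_f
  set h : ℕ → ℝ := fun n => if n = 0 then 1 else t ^ n / (π * (n + 1)) with hh
  have hh_le_g : ∀ n, h n ≤ g n := by
    intro n
    rcases Nat.eq_zero_or_pos n with hn | hn
    · subst hn
      simp [hh, hg, Nat.centralBinom_zero]
    · have hn0 : n ≠ 0 := hn.ne'
      simp only [hh, hg, if_neg hn0]
      have h1 : t ^ n / (π * (n + 1)) ≤ 2 * t ^ n / (π * (2 * n + 1)) := by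
        rw [div_le_div_iff₀ (by positivity) (by positivity)]
        have : (0:ℝ) ≤ t ^ n := by positivity
        nlinarith [this, hπ]
      refine h1.trans ?_
      have h2 := SRW.centralBinom_sq_lower n
      have h3 : q ^ (2 * n) * (2 * 16 ^ n / (π * (2 * n + 1))) ≤
          q ^ (2 * n) * ((Nat.centralBinom n : ℝ)) ^ 2 :=
        mul_le_mul_of_nonneg_left h2 (by positivity)
      calc 2 * t ^ n / (π * (2 * n + 1))
          = q ^ (2 * n) * (2 * 16 ^ n / (π * (2 * n + 1))) := by
            rw [← hqt n]; field_simp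
        _ ≤ _ := h3
  have hh_nonneg : ∀ n, 0 ≤ h n := by
    intro n; rw [hh]; dsimp only; split
    · norm_num
    · positivity
  have hh_le_t : ∀ n, h n ≤ t ^ n := by
    intro n; rw [hh]; dsimp only; split
    · next h0 => subst h0; simp
    · rw [div_le_iff₀ (by positivity)]
      have h1 : (1:ℝ) ≤ π * (n + 1) := by
        have hn : (0:ℝ) ≤ (n:ℝ) := Nat.cast_nonneg n
        nlinarith [Real.pi_gt_three]
      nlinarith [pow_nonneg ht0.le n]
  have hsum_h : Summable h := Summable.of_nonneg_of_le hh_nonneg hh_le_t hsum_t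
  have hhg : ∑' n, h n ≤ ∑' n, g n := Summable.tsum_le_tsum hh_le_g hsum_h hsum_g
  -- compute tsum h
  set A : ℝ := -Real.log (1 - t) with hA
  have hk : HasSum (fun n : ℕ => t ^ n / (π * (n + 1))) (A / (π * t)) := by
    have h0 := Real.hasSum_pow_div_log_of_abs_lt_one (x := t) (by rw [abs_of_pos ht0]; exact ht1)
    have h1 := h0.mul_right (1 / (π * t))
    have hfun : (fun n : ℕ => t ^ (n + 1) / ((n : ℝ) + 1) * (1 / (π * t))) =
        fun n : ℕ => t ^ n / (π * (n + 1)) := by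
      funext n; rw [pow_succ]; field_simp
    have hval : -Real.log (1 - t) * (1 / (π * t)) = A / (π * t) := by
      rw [hA, mul_one_div]
    rw [hfun, hval] at h1
    exact h1
  have he : HasSum (fun n : ℕ => if n = 0 then 1 - 1 / π else 0) (1 - 1 / π) :=
    hasSum_ite_eq 0 (1 - 1 / π)
  have hhsum : HasSum h (A / (π * t) + (1 - 1 / π)) := by
    have := hk.add he
    convert this using 1
    funext n
    rcases Nat.eq_zero_or_pos n with hn | hn
    · subst hn
      simp only [hh, if_pos rfl]
      norm_num
    · simp only [hh, if_neg hn.ne']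
      simp [hn.ne']
  have htsum_h : ∑' n, h n = A / (π * t) + (1 - 1 / π) := hhsum.tsum_eq
  -- lower bound on A
  have h1t : 0 < 1 - t := by linarith
  have hlt : 1 - t ≤ κ / 2 := by
    have e1 : t = 16 / ((4 + κ) ^ 2) := by
      rw [ht, hq]; field_simp; ring
    have e2 : κ / 2 - (1 - 16 / ((4 + κ) ^ 2)) = (κ ^ 3 + 6 * κ ^ 2) / (2 * (4 + κ) ^ 2) := by
      field_simp
      ring
    have e3 : (0:ℝ) ≤ (κ ^ 3 + 6 * κ ^ 2) / (2 * (4 + κ) ^ 2) := by positivity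
    rw [e1]
    linarith [e2 ▸ e3]
  have hAlow : Real.log κ⁻¹ + Real.log 2 ≤ A := by
    have hlog : Real.log (1 - t) ≤ Real.log (κ / 2) := Real.log_le_log h1t hlt
    rw [Real.log_div hκ.ne' two_ne_zero] at hlog
    rw [hA, Real.log_inv]
    linarith
  have hA0 : 0 ≤ A := by
    rw [hA]
    have := Real.log_nonpos h1t.le (by linarith)
    linarith
  -- chain
  have hπt : 0 < π * t := by positivity
  have hstep1 : A / π ≤ A / (π * t) := by
    apply div_le_div_of_nonneg_left hA0 hπt
    nlinarith
  have hstep2 : (Real.log κ⁻¹ + Real.log 2) / π ≤ A / π := by gcongr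
  calc Real.log κ⁻¹ / π + 1 - 4 / (3 * π)
      ≤ (Real.log κ⁻¹ + Real.log 2) / π + (1 - 1 / π) := by
        rw [add_div]
        have hlog2 : 0 ≤ Real.log 2 := Real.log_nonneg one_le_two
        have e : 4 / (3 * π) = 1 / π + 1 / (3 * π) := by field_simp; ring
        have h13 : (0:ℝ) ≤ 1 / (3 * π) := by positivity
        have hl2π : 0 ≤ Real.log 2 / π := by positivity
        linarith
    _ ≤ A / π + (1 - 1 / π) := by linarith [hstep2]
    _ ≤ A / (π * t) + (1 - 1 / π) := by linarith [hstep1]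
    _ = ∑' n, h n := htsum_h.symm
    _ ≤ ∑' n, g n := hhg
    _ ≤ ∑' n, f n := hfg
end

section
/- For every killing rate κ > 0 and every x ∈ ℤ² with |x| ≥ 1, the Green's function satisfies G^{o,o} − G^{o,x} ≥ 3/4. -/
open scoped Real

/-!
Write `w n x` for the number of walks of length `n` from `0` to `x` and `λ = 1 / (4 + κ)`, so
that `G^{o,o} - G^{o,x} = ∑ λⁿ (w n 0 - w n x)`. Splitting a walk of length `2n` at its midpoint
gives `w (2n) (a - b) = ∑_y w n (a - y) w n (b - y)`, so `w (2n)` is a positive-definite function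
on `ℤ²`. Tested on the two points `0, x` this gives `w (2n) x ≤ w (2n) 0`, and on the four points
`0, x, -e, x - e` (for each unit step `e`) it gives
`w (2n+1) 0 - w (2n+1) x ≥ -4 (w (2n) 0 - w (2n) x)`. Since `4λ < 1`, every pair of consecutive
terms `2n, 2n+1` of the series is nonnegative, so the series is at least its first two terms,
`1 - λ w 1 x ≥ 1 - λ > 3/4`.
-/

open Finset

theorem add_le_tsum_of_forall_two_mul_add_nonneg {f : ℕ → ℝ} (hf : Summable f)
    (h : ∀ k, 0 ≤ f (2 * k) + f (2 * k + 1)) : f 0 + f 1 ≤ ∑' n, f n := by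
  have he : Summable fun k => f (2 * k) := hf.comp_injective (mul_right_injective₀ two_ne_zero)
  have ho : Summable fun k => f (2 * k + 1) :=
    hf.comp_injective ((add_left_injective 1).comp (mul_right_injective₀ two_ne_zero))
  rw [← tsum_even_add_odd he ho, ← he.tsum_add ho]
  simpa using (he.add ho).le_tsum 0 fun k _ => h k

namespace RandomWalk

variable {Γ : Type*} [AddCommGroup Γ] {S : Finset Γ}

theorem sum_add_eq_sum_sub (hS : ∀ e ∈ S, -e ∈ S) {M : Type*} [AddCommMonoid M] (f : Γ → M)
    (x : Γ) : ∑ e ∈ S, f (x + e) = ∑ e ∈ S, f (x - e) :=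
  sum_nbij' Neg.neg Neg.neg hS hS (fun e _ => neg_neg e)
    (fun e _ => neg_neg e) fun e _ => by rw [sub_neg_eq_add]

variable (S) in
def walks (n : ℕ) (x : Γ) : Set (Fin (n + 1) → Γ) :=
  {v | v 0 = 0 ∧ v (Fin.last n) = x ∧ ∀ i : Fin n, v i.succ - v i.castSucc ∈ S}

theorem walks_zero_subset (x : Γ) : walks S 0 x ⊆ {0} := fun _ hv =>
  funext fun i => (Fin.eq_zero i).symm ▸ hv.1

theorem sub_penultimate_mem {n : ℕ} {x : Γ} {v : Fin (n + 2) → Γ} (hv : v ∈ walks S (n + 1) x) :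
    x - v (Fin.last n).castSucc ∈ S := by
  simpa [hv.2.1] using hv.2.2 (Fin.last n)

theorem init_mem_walks {n : ℕ} {x : Γ} {v : Fin (n + 2) → Γ} (hv : v ∈ walks S (n + 1) x) :
    Fin.init v ∈ walks S n (x - (x - v (Fin.last n).castSucc)) := by
  obtain ⟨h0, -, hs⟩ := hv
  refine ⟨h0, by simp [Fin.init], fun i => ?_⟩
  simpa only [Fin.init, Fin.succ_castSucc] using hs i.castSucc

theorem snoc_mem_walks {n : ℕ} {x y : Γ} {u : Fin (n + 1) → Γ} (hu : u ∈ walks S n y)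
    (hxy : x - y ∈ S) : Fin.snoc u x ∈ walks S (n + 1) x := by
  obtain ⟨h0, hl, hs⟩ := hu
  refine ⟨by rwa [show (0 : Fin (n + 2)) = Fin.castSucc 0 from rfl, Fin.snoc_castSucc],
    Fin.snoc_last _ _, fun i => ?_⟩
  rcases Fin.eq_castSucc_or_eq_last i with ⟨j, rfl⟩ | rfl
  · rw [Fin.succ_castSucc, Fin.snoc_castSucc, Fin.snoc_castSucc]
    exact hs j
  · simpa [hl] using hxy

def walksSuccEquiv (n : ℕ) (x : Γ) : walks S (n + 1) x ≃ Σ e : S, walks S n (x - e) where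
  toFun v := ⟨⟨_, sub_penultimate_mem v.2⟩, ⟨_, init_mem_walks v.2⟩⟩
  invFun p := ⟨_, snoc_mem_walks p.2.2 (by rw [sub_sub_cancel]; exact p.1.2)⟩
  left_inv v := Subtype.ext ((congrArg _ v.2.2.1.symm).trans (Fin.snoc_init_self v.1))
  right_inv p := Sigma.subtype_ext (Subtype.ext (by simp [p.2.2.2.1])) (by simp)

theorem finite_walks (n : ℕ) (x : Γ) : (walks S n x).Finite := by
  induction n generalizing x with
  | zero => exact (Set.finite_singleton 0).subset (walks_zero_subset x)
  | succ n ih =>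
    have := fun y => (ih y).to_subtype
    exact Set.finite_coe_iff.1 ((walksSuccEquiv (S := S) n x).finite_iff.2 inferInstance)

variable [DecidableEq Γ]

variable (S) in
def walkCount : ℕ → Γ → ℕ
  | 0, x => if x = 0 then 1 else 0
  | n + 1, x => ∑ e ∈ S, walkCount n (x - e)

theorem ncard_walks (n : ℕ) (x : Γ) : (walks S n x).ncard = walkCount S n x := by
  induction n generalizing x with
  | zero =>
    by_cases hx : x = 0
    · subst hx
      rw [Set.Subset.antisymm (walks_zero_subset 0) (by simp [walks]), Set.ncard_singleton]
      simp [walkCount]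
    · rw [Set.eq_empty_of_subset_empty fun v (hv : v ∈ walks S 0 x) => hx (hv.2.1 ▸ hv.1),
        Set.ncard_empty]
      simp [walkCount, hx]
  | succ n ih =>
    have := fun y => (finite_walks (S := S) n y).to_subtype
    rw [← Nat.card_coe_set_eq, Nat.card_congr (walksSuccEquiv n x), Nat.card_sigma]
    simp only [Nat.card_coe_set_eq, ih]
    exact sum_coe_sort S fun e => walkCount S n (x - e)

theorem walkCount_one (x : Γ) : walkCount S 1 x = if x ∈ S then 1 else 0 := by
  simp [walkCount, sub_eq_zero]

theorem walkCount_le_card_pow (n : ℕ) (x : Γ) : walkCount S n x ≤ #S ^ n := by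
  induction n generalizing x with
  | zero => simp only [walkCount]; split_ifs <;> simp
  | succ n ih =>
    calc walkCount S (n + 1) x = ∑ e ∈ S, walkCount S n (x - e) := rfl
      _ ≤ ∑ _e ∈ S, #S ^ n := sum_le_sum fun e _ => ih (x - e)
      _ = #S ^ (n + 1) := by rw [sum_const, smul_eq_mul, pow_succ']

theorem hasFiniteSupport_walkCount (n : ℕ) : (walkCount S n).HasFiniteSupport := by
  induction n with
  | zero =>
    refine (Set.finite_singleton 0).subset fun x hx => ?_
    simpa [walkCount] using hx
  | succ n ih =>
    refine (S.finite_toSet.biUnion fun e _ => ih.image (· + e)).subset fun x hx => ?_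
    obtain ⟨e, he, hxe⟩ := exists_ne_zero_of_sum_ne_zero hx
    exact Set.mem_biUnion he ⟨x - e, hxe, sub_add_cancel x e⟩

theorem walkCount_neg (hS : ∀ e ∈ S, -e ∈ S) (n : ℕ) (x : Γ) :
    walkCount S n (-x) = walkCount S n x := by
  induction n generalizing x with
  | zero => simp [walkCount]
  | succ n ih =>
    calc walkCount S (n + 1) (-x) = ∑ e ∈ S, walkCount S n (x + e) := by
          simp only [walkCount, ← neg_add', ih]
      _ = walkCount S (n + 1) x := sum_add_eq_sum_sub hS _ x

theorem walkCount_add (m n : ℕ) (x : Γ) :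
    walkCount S (m + n) x = ∑ᶠ y, walkCount S m y * walkCount S n (x - y) := by
  induction n generalizing x with
  | zero =>
    rw [finsum_eq_single _ x fun y hy => by simp [walkCount, sub_eq_zero, Ne.symm hy]]
    simp [walkCount]
  | succ n ih =>
    have hfin : ∀ e, (fun y => walkCount S m y * walkCount S n (x - e - y)).HasFiniteSupport :=
      fun e => (hasFiniteSupport_walkCount m).mul_left _
    calc walkCount S (m + (n + 1)) x
        = ∑ e ∈ S, ∑ᶠ y, walkCount S m y * walkCount S n (x - e - y) := by
          simp only [← ih]; rfl
      _ = ∑ᶠ y, walkCount S m y * walkCount S (n + 1) (x - y) := by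
          rw [sum_finsum_comm _ _ fun e _ => hfin e]
          simp only [walkCount, mul_sum, sub_right_comm x]

theorem walkCount_two_mul_sub (hS : ∀ e ∈ S, -e ∈ S) (n : ℕ) (a b : Γ) :
    walkCount S (2 * n) (a - b) = ∑ᶠ y, walkCount S n (a - y) * walkCount S n (b - y) := by
  rw [two_mul, walkCount_add, ← finsum_comp_equiv (Equiv.subLeft a)]
  refine finsum_congr fun y => ?_
  rw [Equiv.subLeft_apply, sub_sub_sub_cancel_left, ← walkCount_neg hS n (y - b), neg_sub]

theorem sum_sum_mul_walkCount_two_mul_nonneg (hS : ∀ e ∈ S, -e ∈ S) (n : ℕ) {ι : Type*}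
    [Fintype ι] (p : ι → Γ) (c : ι → ℝ) :
    0 ≤ ∑ i, ∑ j, c i * c j * walkCount S (2 * n) (p i - p j) := by
  have hfin : ∀ i, (fun y => walkCount S n (p i - y)).HasFiniteSupport := fun i =>
    (hasFiniteSupport_walkCount n).comp_of_injective (sub_right_injective (b := p i))
  set T : Finset Γ := univ.biUnion fun i => (hfin i).toFinset
  have hT : ∀ i j, (walkCount S (2 * n) (p i - p j) : ℝ) =
      ∑ y ∈ T, (walkCount S n (p i - y) : ℝ) * walkCount S n (p j - y) := by
    intro i j
    rw [walkCount_two_mul_sub hS, finsum_eq_sum_of_support_subset _ fun y hy => ?_]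
    · push_cast; rfl
    · exact mem_biUnion.2 ⟨i, mem_univ _, (hfin i).mem_toFinset.2 (left_ne_zero_of_mul hy)⟩
  calc (0 : ℝ) ≤ ∑ y ∈ T, (∑ i, c i * walkCount S n (p i - y)) ^ 2 :=
        sum_nonneg fun y _ => sq_nonneg _
    _ = ∑ i, ∑ j, c i * c j * walkCount S (2 * n) (p i - p j) := by
        simp only [sq, sum_mul_sum]
        simp only [hT, mul_sum]
        rw [sum_comm]
        refine sum_congr rfl fun i _ => ?_
        rw [sum_comm]
        exact sum_congr rfl fun j _ => sum_congr rfl fun y _ => by ring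

theorem walkCount_two_mul_le (hS : ∀ e ∈ S, -e ∈ S) (n : ℕ) (x : Γ) :
    walkCount S (2 * n) x ≤ walkCount S (2 * n) 0 := by
  have h := sum_sum_mul_walkCount_two_mul_nonneg hS n ![0, x] ![1, -1]
  simp only [Fin.sum_univ_two, Matrix.cons_val_zero, Matrix.cons_val_one, Matrix.cons_val_fin_one,
    sub_self, sub_zero, zero_sub, walkCount_neg hS, one_mul, mul_one, mul_neg, neg_mul, neg_neg] at h
  exact_mod_cast (by linarith : (walkCount S (2 * n) x : ℝ) ≤ walkCount S (2 * n) 0)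

theorem walkCount_two_mul_sub_add_add_le (hS : ∀ e ∈ S, -e ∈ S) (n : ℕ) (x e : Γ) :
    (walkCount S (2 * n) (x - e) + walkCount S (2 * n) (x + e) : ℝ) ≤
      2 * (walkCount S (2 * n) 0 - walkCount S (2 * n) x + walkCount S (2 * n) e) := by
  have h := sum_sum_mul_walkCount_two_mul_nonneg hS n ![0, x, -e, x - e] ![1, -1, 1, -1]
  simp only [Fin.sum_univ_four, Matrix.cons_val_zero, Matrix.cons_val_one, Matrix.cons_val,
    one_mul, mul_one, mul_neg, neg_mul, neg_neg, sub_self, sub_zero, zero_sub, sub_neg_eq_add,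
    zero_add, neg_add_cancel, sub_add_cancel, sub_sub_cancel, show -e - x = -(x + e) by abel,
    show -e - (x - e) = -x by abel, show x - e - x = -e by abel, walkCount_neg hS] at h
  linarith

theorem neg_card_mul_le_walkCount_two_mul_add_one_sub (hS : ∀ e ∈ S, -e ∈ S) (n : ℕ) (x : Γ) :
    -#S * (walkCount S (2 * n) 0 - walkCount S (2 * n) x : ℝ) ≤
      walkCount S (2 * n + 1) 0 - walkCount S (2 * n + 1) x := by
  have h0 : (walkCount S (2 * n + 1) 0 : ℝ) = ∑ e ∈ S, (walkCount S (2 * n) e : ℝ) := by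
    simp [walkCount, walkCount_neg hS]
  have hx : (walkCount S (2 * n + 1) x : ℝ) = ∑ e ∈ S, (walkCount S (2 * n) (x - e) : ℝ) := by
    simp [walkCount]
  have h := sum_le_sum fun e (_ : e ∈ S) => walkCount_two_mul_sub_add_add_le hS n x e
  rw [sum_add_distrib, sum_add_eq_sum_sub hS (fun z => (walkCount S (2 * n) z : ℝ)), ← mul_sum,
    sum_add_distrib, sum_const, nsmul_eq_mul, ← h0, ← hx] at h
  linarith

variable (S) in
noncomputable def green (t : ℝ) (x : Γ) : ℝ := ∑' n, t ^ n * walkCount S n x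

theorem summable_walkCount {t : ℝ} (ht₀ : 0 ≤ t) (ht : t * #S < 1) (x : Γ) :
    Summable fun n => t ^ n * (walkCount S n x : ℝ) := by
  refine (summable_geometric_of_lt_one (by positivity) ht).of_nonneg_of_le (fun n => by positivity)
    fun n => ?_
  rw [mul_pow]
  gcongr
  exact_mod_cast walkCount_le_card_pow n x

theorem one_sub_le_green_zero_sub_green (hS : ∀ e ∈ S, -e ∈ S) {t : ℝ} (ht₀ : 0 ≤ t)
    (ht : t * #S < 1) {x : Γ} (hx : x ≠ 0) : 1 - t ≤ green S t 0 - green S t x := by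
  set a : ℕ → ℝ := fun n => walkCount S n 0 - walkCount S n x
  have hsummable : Summable fun n => t ^ n * a n :=
    ((summable_walkCount ht₀ ht 0).sub (summable_walkCount ht₀ ht x)).congr fun n => by
      simp only [a, mul_sub]
  have hdiff : green S t 0 - green S t x = ∑' n, t ^ n * a n := by
    rw [green, green, ← (summable_walkCount ht₀ ht 0).tsum_sub (summable_walkCount ht₀ ht x)]
    simp only [a, mul_sub]
  rw [hdiff]
  refine le_trans ?_ (add_le_tsum_of_forall_two_mul_add_nonneg hsummable fun k => ?_)
  · have ha₀ : a 0 = 1 := by simp [a, walkCount, hx]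
    have ha₁ : -1 ≤ a 1 := by simp only [a, walkCount_one]; split_ifs <;> norm_num
    rw [pow_zero, pow_one, ha₀]
    nlinarith
  · have ha : 0 ≤ a (2 * k) := sub_nonneg.2 (by exact_mod_cast walkCount_two_mul_le hS k x)
    have hb := neg_card_mul_le_walkCount_two_mul_add_one_sub hS k x
    calc (0 : ℝ) ≤ t ^ (2 * k) * (a (2 * k) * (1 - t * #S)) := by
          have : 0 ≤ 1 - t * #S := by linarith
          positivity
      _ ≤ t ^ (2 * k) * (a (2 * k) + t * a (2 * k + 1)) := by
          gcongr
          nlinarith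
      _ = t ^ (2 * k) * a (2 * k) + t ^ (2 * k + 1) * a (2 * k + 1) := by ring

end RandomWalk

open RandomWalk

def unitSteps : Finset (ℤ × ℤ) := {(1, 0), (-1, 0), (0, 1), (0, -1)}

theorem gnorm_eq_one_iff_mem_unitSteps (d : ℤ × ℤ) : gnorm d = 1 ↔ d ∈ unitSteps := by
  obtain ⟨d₁, d₂⟩ := d
  simp only [gnorm, unitSteps, mem_insert, mem_singleton, Prod.mk.injEq]
  omega

theorem W_eq_walkCount (n : ℕ) (x : ℤ × ℤ) : W n x = walkCount unitSteps n x := by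
  simp only [W, Prod.mk_zero_zero, gnorm_eq_one_iff_mem_unitSteps, ← ncard_walks]
  rfl

theorem G_eq_green (κ : ℝ) (x : ℤ × ℤ) : G κ x = green unitSteps (1 / (4 + κ)) x := by
  simp only [G, green, W_eq_walkCount]

/-- Proposition 3.3, eq. (3.8): `G^{o,o} − G^{o,x} ≥ 3/4` for every `|x| ≥ 1`. -/
theorem stmt4 (κ : ℝ) (hκ : 0 < κ) (x : ℤ × ℤ) (hx : 1 ≤ gnorm x) :
    (3 : ℝ) / 4 ≤ G κ (0, 0) - G κ x := by
  have hS : ∀ e ∈ unitSteps, -e ∈ unitSteps := by decide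
  have hcard : #unitSteps = 4 := rfl
  have hx₀ : x ≠ 0 := by rintro rfl; simp [gnorm] at hx
  have ht : 1 / (4 + κ) < 1 / 4 := one_div_lt_one_div_of_lt (by norm_num) (by linarith)
  have hbound := one_sub_le_green_zero_sub_green hS (t := 1 / (4 + κ)) (by positivity)
    (by rw [hcard]; push_cast; linarith) hx₀
  rw [Prod.mk_zero_zero, G_eq_green, G_eq_green]
  linarith
end

section
/- For every killing rate κ with 0 < κ < 1 and every integer N ≥ 1 with Nκ < 1, the tail of the Green's function series satisfies Σ_{n=N+1}^∞ (4+κ)^{−2n} W_{2n}^{o,o} ≤ (log((Nκ)^{−1}))/π + 1/(6πN) + 4. -/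
open scoped Real

/-!
A closed walk of length `2n` is determined by its steps. In the rotated coordinates
`(x₁ + x₂, x₁ - x₂)` every step is `(±1, ±1)` and both coordinate sums vanish, so each coordinate
takes the value `+1` at exactly `n` steps; hence `W_{2n}^{o,o} ≤ C(2n,n)²`. Wallis' inequality gives
`π n C(2n,n)² ≤ 16ⁿ`, so the `k`-th term of the series is at most `qᵏ / (π k)` with
`q = 16 / (4 + κ)² < 1`. Splitting the sum at `M = ⌈1/κ⌉`, the terms up to `M` contribute at most
`log (M / N) / π` (comparison with `∫ dx / x`) and the remaining ones at most
`1 / (π (M + 1) (1 - q)) ≤ 5 / π`.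
-/

open Finset

theorem Fin.sum_succ_sub_castSucc {M : Type*} [AddCommGroup M] {m : ℕ} (v : Fin (m + 1) → M) :
    ∑ i : Fin m, (v i.succ - v i.castSucc) = v (Fin.last m) - v 0 := by
  induction m with
  | zero => simp
  | succ m ih =>
    rw [Fin.sum_univ_castSucc, Fin.succ_last]
    simp only [Fin.succ_castSucc]
    rw [ih (fun j => v j.castSucc)]
    simp only [Fin.castSucc_zero]
    abel

theorem Fin.eq_of_apply_zero_of_succ_sub_castSucc {M : Type*} [AddGroup M] {m : ℕ}
    {v w : Fin (m + 1) → M} (h0 : v 0 = w 0)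
    (hsteps : ∀ i : Fin m, v i.succ - v i.castSucc = w i.succ - w i.castSucc) : v = w := by
  funext j
  induction j using Fin.induction with
  | zero => exact h0
  | succ i ih => rw [← sub_add_cancel (v i.succ), hsteps, ih, sub_add_cancel]

theorem card_filter_eq_one_mul_two {ι : Type*} [Fintype ι] {a : ι → ℤ}
    (ha : ∀ i, a i = 1 ∨ a i = -1) (hsum : ∑ i, a i = 0) :
    #{i | a i = 1} * 2 = Fintype.card ι := by
  have hshift : ∀ i, a i + 1 = if a i = 1 then 2 else 0 := fun i => by
    rcases ha i with h | h <;> simp [h]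
  have : (#{i | a i = 1} * 2 : ℤ) = Fintype.card ι := by
    calc (#{i | a i = 1} * 2 : ℤ) = ∑ i, if a i = 1 then 2 else 0 := by
          rw [← sum_filter, sum_const, nsmul_eq_mul]
      _ = ∑ i, a i + Fintype.card ι := by
          simp only [← hshift, sum_add_distrib, sum_const, card_univ, nsmul_eq_mul, mul_one]
      _ = Fintype.card ι := by rw [hsum, zero_add]
  exact_mod_cast this

theorem gnorm_eq_one_iff {d : ℤ × ℤ} :
    gnorm d = 1 ↔ (d.1 + d.2 = 1 ∨ d.1 + d.2 = -1) ∧ (d.1 - d.2 = 1 ∨ d.1 - d.2 = -1) := by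
  unfold gnorm; omega

theorem eq_of_gnorm_eq_one {d e : ℤ × ℤ} (hd : gnorm d = 1) (he : gnorm e = 1)
    (hplus : d.1 + d.2 = 1 ↔ e.1 + e.2 = 1) (hminus : d.1 - d.2 = 1 ↔ e.1 - e.2 = 1) : d = e := by
  unfold gnorm at hd he; ext <;> omega

theorem W_two_mul_origin_le_centralBinom_sq (n : ℕ) : W (2 * n) (0, 0) ≤ n.centralBinom ^ 2 := by
  classical
  set d : (Fin (2 * n + 1) → ℤ × ℤ) → Fin (2 * n) → ℤ × ℤ := fun v i => v i.succ - v i.castSucc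
  set S := {v : Fin (2 * n + 1) → ℤ × ℤ |
    v 0 = (0, 0) ∧ v (Fin.last (2 * n)) = (0, 0) ∧ ∀ i : Fin (2 * n), gnorm (d v i) = 1}
  let F (v : Fin (2 * n + 1) → ℤ × ℤ) : Finset (Fin (2 * n)) × Finset (Fin (2 * n)) :=
    (univ.filter fun i => (d v i).1 + (d v i).2 = 1, univ.filter fun i => (d v i).1 - (d v i).2 = 1)
  let T : Finset (Finset (Fin (2 * n)) × Finset (Fin (2 * n))) :=
    powersetCard n univ ×ˢ powersetCard n univ
  have hmaps : ∀ v ∈ S, F v ∈ (T : Set _) := by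
    rintro v ⟨h0, hlast, hunit⟩
    have hclosed : ∑ i, d v i = 0 := by
      simp only [d, Fin.sum_succ_sub_castSucc, h0, hlast, sub_self]
    have hunit' := fun i => gnorm_eq_one_iff.mp (hunit i)
    have hplus := card_filter_eq_one_mul_two (fun i => (hunit' i).1)
      (by rw [sum_add_distrib, ← Prod.fst_sum, ← Prod.snd_sum, hclosed]; rfl)
    have hminus := card_filter_eq_one_mul_two (fun i => (hunit' i).2)
      (by rw [sum_sub_distrib, ← Prod.fst_sum, ← Prod.snd_sum, hclosed]; rfl)
    simp only [Fintype.card_fin] at hplus hminus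
    simp only [F, T, coe_product, Set.mem_prod, mem_coe, mem_powersetCard_univ]
    omega
  have hinj : Set.InjOn F S := by
    rintro v ⟨hv0, -, hv⟩ w ⟨hw0, -, hw⟩ hvw
    simp only [F, Prod.mk.injEq, Finset.ext_iff, mem_filter, mem_univ, true_and] at hvw
    exact Fin.eq_of_apply_zero_of_succ_sub_castSucc (hv0.trans hw0.symm)
      fun i => eq_of_gnorm_eq_one (hv i) (hw i) (hvw.1 i) (hvw.2 i)
  calc W (2 * n) (0, 0) = S.ncard := rfl
    _ ≤ (T : Set _).ncard := Set.ncard_le_ncard_of_injOn F hmaps hinj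
    _ = n.centralBinom ^ 2 := by
      rw [Set.ncard_coe_finset, card_product, card_powersetCard, card_univ, Fintype.card_fin,
        ← Nat.centralBinom_eq_two_mul_choose, sq]

theorem Real.Wallis.W_eq_centralBinom (n : ℕ) :
    Real.Wallis.W n = 16 ^ n / ((n.centralBinom : ℝ) ^ 2 * (2 * n + 1)) := by
  have hfact : (n.centralBinom : ℝ) * (n.factorial * n.factorial) = (2 * n).factorial := by
    have h := Nat.choose_mul_factorial_mul_factorial (by omega : n ≤ 2 * n)
    rw [show 2 * n - n = n by omega] at h
    rw [Nat.centralBinom_eq_two_mul_choose, ← mul_assoc]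
    exact_mod_cast h
  rw [Real.Wallis.W_eq_factorial_ratio, ← hfact, pow_mul]
  field_simp
  norm_num

theorem pi_mul_centralBinom_sq_le (n : ℕ) : π * n * (n.centralBinom : ℝ) ^ 2 ≤ 16 ^ n := by
  have hc : (0 : ℝ) < (n.centralBinom : ℝ) ^ 2 := by have := n.centralBinom_pos; positivity
  have hW := Real.Wallis.le_W n
  rw [Real.Wallis.W_eq_centralBinom, le_div_iff₀ (by positivity)] at hW
  have hn : (0 : ℝ) ≤ n := n.cast_nonneg
  calc π * n * (n.centralBinom : ℝ) ^ 2
      ≤ (2 * n + 1) / (2 * n + 2) * (π / 2) * ((n.centralBinom : ℝ) ^ 2 * (2 * n + 1)) := by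
        rw [div_mul_eq_mul_div, div_mul_eq_mul_div, le_div_iff₀ (by positivity)]
        nlinarith [Real.pi_pos, mul_nonneg Real.pi_pos.le hc.le]
    _ ≤ 16 ^ n := hW

theorem sum_range_inv_add_le_log {x : ℝ} (hx : 0 < x) (K : ℕ) :
    ∑ i ∈ range K, (x + ↑(i + 1))⁻¹ ≤ Real.log ((x + K) / x) := by
  refine (inv_antitoneOn_Icc_right hx).sum_le_integral.trans_eq (integral_inv ?_)
  rw [Set.uIcc_of_le (le_add_of_nonneg_right K.cast_nonneg), Set.mem_Icc, not_and_or, not_le]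
  exact .inl hx

section GeometricHarmonic

variable {q : ℝ}

theorem pow_add_div_le (hq0 : 0 ≤ q) (hq1 : q ≤ 1) {m : ℕ} (hm : 0 < m) (j : ℕ) :
    q ^ (m + j) / ↑(m + j) ≤ q ^ j / m :=
  div_le_div₀ (pow_nonneg hq0 j) (pow_le_pow_of_le_one hq0 hq1 (by omega)) (by exact_mod_cast hm)
    (by exact_mod_cast m.le_add_right j)

theorem summable_pow_add_div (hq0 : 0 ≤ q) (hq1 : q < 1) {m : ℕ} (hm : 0 < m) :
    Summable fun j : ℕ => q ^ (m + j) / ↑(m + j) :=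
  .of_nonneg_of_le (fun _ => by positivity) (pow_add_div_le hq0 hq1.le hm)
    ((summable_geometric_of_lt_one hq0 hq1).div_const _)

theorem tsum_pow_add_div_le (hq0 : 0 ≤ q) (hq1 : q < 1) {m : ℕ} (hm : 0 < m) :
    ∑' j : ℕ, q ^ (m + j) / ↑(m + j) ≤ 1 / (m * (1 - q)) :=
  calc ∑' j : ℕ, q ^ (m + j) / ↑(m + j)
      ≤ ∑' j : ℕ, q ^ j / m :=
        (summable_pow_add_div hq0 hq1 hm).tsum_le_tsum (pow_add_div_le hq0 hq1.le hm)
          ((summable_geometric_of_lt_one hq0 hq1).div_const _)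
    _ = 1 / (m * (1 - q)) := by
        rw [tsum_div_const, tsum_geometric_of_lt_one hq0 hq1]
        field_simp

theorem tsum_pow_div_le_log_add (hq0 : 0 ≤ q) (hq1 : q < 1) {N M : ℕ} (hN : 1 ≤ N)
    (hNM : N ≤ M) :
    ∑' j : ℕ, q ^ (N + 1 + j) / ↑(N + 1 + j) ≤ Real.log (M / N) + 1 / ((M + 1) * (1 - q)) := by
  obtain ⟨K, rfl⟩ := Nat.exists_eq_add_of_le hNM
  have hN0 : (0 : ℝ) < N := by exact_mod_cast hN
  have hhead : ∑ j ∈ range K, q ^ (N + 1 + j) / ↑(N + 1 + j) ≤ Real.log ((N + K) / N) := by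
    refine (sum_le_sum fun j _ => ?_).trans (sum_range_inv_add_le_log hN0 K)
    rw [div_eq_mul_inv, show ((N + 1 + j : ℕ) : ℝ) = N + ↑(j + 1) by push_cast; ring]
    exact mul_le_of_le_one_left (by positivity) (pow_le_one₀ hq0 hq1.le)
  have htail : ∑' j, q ^ (N + 1 + (j + K)) / ↑(N + 1 + (j + K))
      ≤ 1 / ((↑(N + K) + 1) * (1 - q)) := by
    have h := tsum_pow_add_div_le hq0 hq1 (m := N + K + 1) (by omega)
    simp only [show ∀ j, N + 1 + (j + K) = N + K + 1 + j from fun j => by omega]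
    exact_mod_cast h
  rw [← (summable_pow_add_div hq0 hq1 (m := N + 1) (by omega)).sum_add_tsum_nat_add K]
  push_cast at hhead htail ⊢
  exact add_le_add hhead htail

end GeometricHarmonic

theorem W_two_mul_origin_le_div {k : ℕ} (hk : 0 < k) :
    (W (2 * k) (0, 0) : ℝ) ≤ 16 ^ k / (π * k) := by
  have hk0 : (0 : ℝ) < k := by exact_mod_cast hk
  rw [le_div_iff₀ (mul_pos Real.pi_pos hk0)]
  calc (W (2 * k) (0, 0) : ℝ) * (π * k) ≤ (k.centralBinom : ℝ) ^ 2 * (π * k) := by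
        gcongr; exact_mod_cast W_two_mul_origin_le_centralBinom_sq k
    _ = π * k * (k.centralBinom : ℝ) ^ 2 := by ring
    _ ≤ 16 ^ k := pi_mul_centralBinom_sq_le k

section KillingRate

variable {κ : ℝ}

theorem sixteen_div_sq_lt_one (hκ : 0 < κ) : 16 / (4 + κ) ^ 2 < 1 := by
  rw [div_lt_one (by positivity)]; nlinarith

theorem tsum_W_tail_le (hκ : 0 < κ) (N : ℕ) :
    ∑' n : ℕ, (1 / (4 + κ)) ^ (2 * (N + 1 + n)) * (W (2 * (N + 1 + n)) (0, 0) : ℝ)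
      ≤ (∑' n : ℕ, (16 / (4 + κ) ^ 2) ^ (N + 1 + n) / ↑(N + 1 + n)) / π := by
  have hq0 : (0 : ℝ) ≤ 16 / (4 + κ) ^ 2 := by positivity
  have hsum := (summable_pow_add_div hq0 (sixteen_div_sq_lt_one hκ) (m := N + 1)
    (by omega)).div_const π
  have hterm : ∀ n : ℕ, (1 / (4 + κ)) ^ (2 * (N + 1 + n)) * (W (2 * (N + 1 + n)) (0, 0) : ℝ)
      ≤ (16 / (4 + κ) ^ 2) ^ (N + 1 + n) / ↑(N + 1 + n) / π := fun n =>
    calc _ ≤ (1 / (4 + κ)) ^ (2 * (N + 1 + n)) * (16 ^ (N + 1 + n) / (π * ↑(N + 1 + n))) := by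
          gcongr; exact W_two_mul_origin_le_div (by omega)
      _ = ((1 / (4 + κ)) ^ 2 * 16) ^ (N + 1 + n) / ↑(N + 1 + n) / π := by
          rw [pow_mul, mul_pow]; ring
      _ = _ := by congr 3; field_simp
  rw [← tsum_div_const]
  exact Summable.tsum_le_tsum hterm (.of_nonneg_of_le (fun _ => by positivity) hterm hsum) hsum

theorem one_div_mul_one_sub_sixteen_div_le (hκ : 0 < κ) (hκ1 : κ < 1) {M : ℕ}
    (hκM : 1 ≤ κ * M) : 1 / ((M + 1) * (1 - 16 / (4 + κ) ^ 2)) ≤ 5 := by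
  have h1q : 1 - 16 / (4 + κ) ^ 2 = κ * (8 + κ) / (4 + κ) ^ 2 := by field_simp; ring
  rw [h1q, div_le_iff₀ (by positivity), mul_div_assoc', mul_div_assoc',
    le_div_iff₀ (by positivity)]
  nlinarith

theorem log_ceil_inv_div_le (hκ : 0 < κ) (hκ1 : κ ≤ 1) {N : ℕ} (hN : 1 ≤ N) :
    Real.log (⌈κ⁻¹⌉₊ / N) ≤ Real.log ((N * κ)⁻¹) + 1 := by
  have hN0 : (0 : ℝ) < N := by exact_mod_cast hN
  have hM0 : (0 : ℝ) < ⌈κ⁻¹⌉₊ := by simpa using hκ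
  have hM2 : (⌈κ⁻¹⌉₊ : ℝ) ≤ 2 * κ⁻¹ := Nat.ceil_le_two_mul (by
    rw [inv_le_inv₀ (by norm_num) hκ]; linarith)
  calc Real.log (⌈κ⁻¹⌉₊ / N) ≤ Real.log (2 * (N * κ)⁻¹) := by
        gcongr
        calc (⌈κ⁻¹⌉₊ : ℝ) / N ≤ 2 * κ⁻¹ / N := by gcongr
          _ = 2 * (N * κ)⁻¹ := by field_simp
    _ = Real.log 2 + Real.log ((N * κ)⁻¹) := Real.log_mul two_ne_zero (by positivity)
    _ ≤ Real.log ((N * κ)⁻¹) + 1 := by linarith [Real.log_two_lt_d9]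

end KillingRate

theorem stmt6_general (κ : ℝ) (hκ : 0 < κ) (N : ℕ) (hN : 1 ≤ N)
    (hNκ : (N : ℝ) * κ < 1) :
    (∑' n : ℕ, (1 / (4 + κ)) ^ (2 * (N + 1 + n)) * (W (2 * (N + 1 + n)) (0, 0) : ℝ))
      ≤ Real.log ((N * κ)⁻¹) / π + 1 / (6 * π * N) + 4 := by
  have hκ1 : κ < 1 := by nlinarith [(Nat.one_le_cast (α := ℝ)).mpr hN]
  set M := ⌈κ⁻¹⌉₊
  have hκM : 1 ≤ κ * M := (inv_le_iff_one_le_mul₀' hκ).mp (Nat.le_ceil _)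
  have hNM : N ≤ M := by
    have : (N : ℝ) < M := by nlinarith
    exact_mod_cast this.le
  calc _ ≤ (∑' n : ℕ, (16 / (4 + κ) ^ 2) ^ (N + 1 + n) / ↑(N + 1 + n)) / π :=
        tsum_W_tail_le hκ N
    _ ≤ (Real.log (M / N) + 1 / ((M + 1) * (1 - 16 / (4 + κ) ^ 2))) / π := by
        gcongr
        exact tsum_pow_div_le_log_add (by positivity) (sixteen_div_sq_lt_one hκ) hN hNM
    _ ≤ (Real.log ((N * κ)⁻¹) + 1 + 5) / π := by
        gcongr
        · exact log_ceil_inv_div_le hκ hκ1.le hN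
        · exact one_div_mul_one_sub_sixteen_div_le hκ hκ1 hκM
    _ ≤ Real.log ((N * κ)⁻¹) / π + 1 / (6 * π * N) + 4 := by
        have : 6 / π ≤ 2 := by rw [div_le_iff₀ Real.pi_pos]; linarith [Real.pi_gt_three]
        have : 0 ≤ 1 / (6 * π * N) := by positivity
        have : (Real.log ((N * κ)⁻¹) + 1 + 5) / π = Real.log ((N * κ)⁻¹) / π + 6 / π := by ring
        linarith

/-- Lemma 3.4, eq. (3.10): tail bound for the Green's function series when `Nκ < 1`. -/
theorem stmt6 (κ : ℝ) (hκ : 0 < κ) (hκ' : κ < 1) (N : ℕ) (hN : 1 ≤ N)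
    (hNκ : (N : ℝ) * κ < 1) :
    (∑' n : ℕ, (1 / (4 + κ)) ^ (2 * (N + 1 + n)) * (W (2 * (N + 1 + n)) (0, 0) : ℝ))
      ≤ Real.log ((N * κ)⁻¹) / π + 1 / (6 * π * N) + 4 :=
  stmt6_general κ hκ N hN hNκ
end

section
/- Let κ > 0 be a killing rate with κ^{−1} ≥ e^{30}. Then for every x ∈ ℤ² with |x| ≥ 2κ^{−1}, the Green's function satisfies G^{o,x} ≤ G^{o,o}/2. -/
open scoped Real

/-- the four unit steps -/
def Dset : Finset (ℤ × ℤ) := {(1,0), (-1,0), (0,1), (0,-1)}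

lemma mem_Dset (d : ℤ × ℤ) : d ∈ Dset ↔ gnorm d = 1 := by
  obtain ⟨a, b⟩ := d
  simp only [Dset, Finset.mem_insert, Finset.mem_singleton, Prod.mk.injEq, gnorm]
  omega

lemma tele {M : Type*} [AddCommGroup M] : ∀ (n : ℕ) (v : Fin (n+1) → M),
    ∑ i : Fin n, (v i.succ - v i.castSucc) = v (Fin.last n) - v 0 := by
  intro n
  induction n with
  | zero => intro v; simp
  | succ n ih =>
    intro v
    rw [Fin.sum_univ_castSucc]
    have h := ih (fun j => v j.castSucc)
    simp only [Fin.castSucc_zero] at h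
    simp only [Fin.succ_castSucc]
    rw [h, Fin.succ_last]
    abel

lemma W_le_exp (n : ℕ) (x : ℤ × ℤ) (l : ℝ) :
    (W n x : ℝ) * Real.exp (l * (gnorm x : ℝ)) ≤
      (2 * Real.exp l + 2 * Real.exp (-l)) ^ n := by
  classical
  set e1 : ℤ := if 0 ≤ x.1 then 1 else -1 with he1
  set e2 : ℤ := if 0 ≤ x.2 then 1 else -1 with he2
  set L : ℤ × ℤ → ℤ := fun y => e1 * y.1 + e2 * y.2 with hL
  have hLx : L x = (gnorm x : ℤ) := by
    simp only [hL, gnorm, he1, he2]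
    split_ifs <;> omega
  set T := (Fintype.piFinset fun _ : Fin n => Dset).filter
    (fun s => ∑ i, L (s i) = (gnorm x : ℤ)) with hT
  -- Step A : W n x ≤ T.card
  have hcard : W n x ≤ T.card := by
    rw [← Set.ncard_coe_finset]
    apply Set.ncard_le_ncard_of_injOn (fun v (i : Fin n) => v i.succ - v i.castSucc)
    · rintro v ⟨hv0, hvl, hvstep⟩
      simp only [hT, Finset.coe_filter, Set.mem_setOf_eq, Fintype.mem_piFinset]
      refine ⟨fun i => (mem_Dset _).2 (hvstep i), ?_⟩
      have hsum : ∑ i : Fin n, (v i.succ - v i.castSucc) = x := by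
        rw [tele, hv0, hvl]; simp
      have : ∑ i : Fin n, L (v i.succ - v i.castSucc) = L x := by
        rw [hL]
        simp only
        rw [Finset.sum_add_distrib, ← Finset.mul_sum, ← Finset.mul_sum,
          ← Prod.fst_sum, ← Prod.snd_sum, hsum]
      rw [this, hLx]
    · intro v hv w hw hvw
      funext j
      induction j using Fin.induction with
      | zero => rw [hv.1, hw.1]
      | succ i ihi =>
        have h1 := congrFun hvw i
        simp only at h1
        have : v i.succ = (v i.succ - v i.castSucc) + v i.castSucc := by abel
        rw [this, h1, ihi]
        abel
  -- Step B
  have hDsum : ∑ d ∈ Dset, Real.exp (l * (L d : ℝ)) =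
      2 * Real.exp l + 2 * Real.exp (-l) := by
    rw [hL]
    have : ∀ e : ℤ, (e = 1 ∨ e = -1) → ∀ z : ℤ,
        Real.exp (l * ((e * z : ℤ) : ℝ)) = Real.exp (l * (z : ℝ) * (e : ℝ)) := by
      intro e he z; push_cast; ring_nf
    simp only [Dset]
    rw [Finset.sum_insert (by decide), Finset.sum_insert (by decide),
      Finset.sum_insert (by decide), Finset.sum_singleton]
    have h1 : e1 = 1 ∨ e1 = -1 := by rw [he1]; split_ifs <;> simp
    have h2 : e2 = 1 ∨ e2 = -1 := by rw [he2]; split_ifs <;> simp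
    rcases h1 with h1 | h1 <;> rcases h2 with h2 | h2 <;>
      rw [h1, h2] <;> norm_num <;> ring
  have hTB : (T.card : ℝ) * Real.exp (l * (gnorm x : ℝ)) ≤
      (2 * Real.exp l + 2 * Real.exp (-l)) ^ n := by
    calc (T.card : ℝ) * Real.exp (l * (gnorm x : ℝ))
        = ∑ _s ∈ T, Real.exp (l * (gnorm x : ℝ)) := by
          rw [Finset.sum_const, nsmul_eq_mul]
      _ = ∑ s ∈ T, ∏ i : Fin n, Real.exp (l * (L (s i) : ℝ)) := by
          apply Finset.sum_congr rfl
          intro s hs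
          rw [hT, Finset.mem_filter] at hs
          rw [← Real.exp_sum]
          congr 1
          have h0 : ((gnorm x : ℕ) : ℝ) = ∑ i : Fin n, ((L (s i) : ℤ) : ℝ) := by
            exact_mod_cast (congrArg (fun z : ℤ => (z : ℝ)) hs.2).symm
          rw [h0, Finset.mul_sum]
      _ ≤ ∑ s ∈ Fintype.piFinset (fun _ : Fin n => Dset),
            ∏ i : Fin n, Real.exp (l * (L (s i) : ℝ)) := by
          apply Finset.sum_le_sum_of_subset_of_nonneg (Finset.filter_subset _ _)
          intro s _ _
          exact Finset.prod_nonneg fun i _ => (Real.exp_pos _).le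
      _ = ∏ _i : Fin n, ∑ d ∈ Dset, Real.exp (l * (L d : ℝ)) :=
          (Finset.prod_univ_sum (fun _ : Fin n => Dset)
            (fun _ d => Real.exp (l * (L d : ℝ)))).symm
      _ = (2 * Real.exp l + 2 * Real.exp (-l)) ^ n := by
          rw [hDsum, Finset.prod_const, Finset.card_univ, Fintype.card_fin]
  calc (W n x : ℝ) * Real.exp (l * (gnorm x : ℝ))
      ≤ (T.card : ℝ) * Real.exp (l * (gnorm x : ℝ)) := by
        apply mul_le_mul_of_nonneg_right _ (Real.exp_pos _).le
        exact Nat.cast_le.mpr hcard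
    _ ≤ _ := hTB


lemma W_le_bound (n : ℕ) (x : ℤ × ℤ) (l : ℝ) :
    (W n x : ℝ) ≤ Real.exp (-(l * (gnorm x : ℝ))) *
      (2 * Real.exp l + 2 * Real.exp (-l)) ^ n := by
  have h := W_le_exp n x l
  have he : (0:ℝ) < Real.exp (l * (gnorm x : ℝ)) := Real.exp_pos _
  rw [Real.exp_neg]
  calc (W n x : ℝ)
      ≤ (2 * Real.exp l + 2 * Real.exp (-l)) ^ n / Real.exp (l * (gnorm x : ℝ)) :=
        (le_div_iff₀ he).mpr h
    _ = _ := by rw [div_eq_inv_mul]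

lemma W_le_four (n : ℕ) (x : ℤ × ℤ) : (W n x : ℝ) ≤ 4 ^ n := by
  have h := W_le_bound n x 0
  norm_num at h
  exact h

lemma summableG {k : ℝ} (hk : 0 < k) (x : ℤ × ℤ) :
    Summable (fun n : ℕ => (1 / (4 + k)) ^ n * (W n x : ℝ)) := by
  have h4 : (0:ℝ) < 4 + k := by linarith
  have hb : ∀ n : ℕ, (1 / (4 + k)) ^ n * (W n x : ℝ) ≤ (4 / (4 + k)) ^ n := by
    intro n
    calc (1 / (4 + k)) ^ n * (W n x : ℝ) ≤ (1 / (4 + k)) ^ n * 4 ^ n := by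
          apply mul_le_mul_of_nonneg_left (W_le_four n x) (by positivity)
      _ = (4 / (4 + k)) ^ n := by rw [← mul_pow]; ring_nf
  exact Summable.of_nonneg_of_le (fun n => by positivity) hb
    (summable_geometric_of_lt_one (by positivity) (by rw [div_lt_one h4]; linarith))

lemma W_zero : W 0 (0, 0) = 1 := by
  unfold W
  have h : {v : Fin 1 → ℤ × ℤ | v 0 = (0, 0) ∧ v (Fin.last 0) = (0, 0) ∧
      ∀ i : Fin 0, gnorm (v i.succ - v i.castSucc) = 1} =
      {fun _ => ((0:ℤ), (0:ℤ))} := by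
    ext v
    simp only [Set.mem_setOf_eq, Set.mem_singleton_iff]
    constructor
    · rintro ⟨h0, -, -⟩
      funext i
      rw [Subsingleton.elim i 0]
      exact h0
    · rintro rfl
      exact ⟨rfl, rfl, fun i => i.elim0⟩
  rw [h, Set.ncard_singleton]

lemma cosh_bound {l : ℝ} (h0 : 0 ≤ l) (h1 : l ≤ 1/2) :
    Real.exp l + Real.exp (-l) ≤ 2 + 3 * l ^ 2 := by
  have ha := Real.add_one_le_exp l
  have hb := Real.add_one_le_exp (-l)
  have hab : Real.exp l * Real.exp (-l) = 1 := by
    rw [← Real.exp_add]; simp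
  nlinarith [Real.exp_pos l, Real.exp_pos (-l),
    sq_nonneg (Real.exp l - Real.exp (-l)), sq_nonneg l,
    mul_pos (Real.exp_pos l) (Real.exp_pos (-l))]

lemma twelve_sq_le_exp {t : ℝ} (ht : 30 ≤ t) : 12 * t ^ 2 ≤ Real.exp t := by
  have hs : 0 ≤ t - 30 := by linarith
  have h1 : Real.exp t = Real.exp 30 * Real.exp (t - 30) := by
    rw [← Real.exp_add]; ring_nf
  have h2 : (1024 * 1024 * 1024 : ℝ) ≤ Real.exp 30 := by
    have he : Real.exp 30 = Real.exp 1 ^ (30:ℕ) := by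
      rw [← Real.exp_nat_mul]; norm_num
    have h2' : (2:ℝ) ≤ Real.exp 1 := by
      have := Real.add_one_le_exp 1; linarith
    calc (1024 * 1024 * 1024 : ℝ) = 2 ^ (30:ℕ) := by norm_num
      _ ≤ Real.exp 1 ^ (30:ℕ) := pow_le_pow_left₀ (by norm_num) h2' 30
      _ = Real.exp 30 := he.symm
  have h3 : (1 + (t - 30)/2) ^ 2 ≤ Real.exp (t - 30) := by
    have he : Real.exp (t - 30) = Real.exp ((t - 30)/2) ^ 2 := by
      rw [sq, ← Real.exp_add]; ring_nf
    rw [he]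
    apply pow_le_pow_left₀ (by linarith)
    have := Real.add_one_le_exp ((t - 30)/2); linarith
  nlinarith [h1, h2, h3, hs, Real.exp_pos (t - 30), sq_nonneg (t - 30)]

/-- Proposition 3.5: if `κ⁻¹ ≥ e^{30}` and `|x| ≥ 2κ⁻¹`, then `G^{o,x} ≤ G^{o,o}/2`. -/
theorem stmt9 (κ : ℝ) (hκ : 0 < κ) (hκ' : Real.exp 30 ≤ κ⁻¹)
    (x : ℤ × ℤ) (hx : 2 * κ⁻¹ ≤ (gnorm x : ℝ)) :
    G κ x ≤ G κ (0, 0) / 2 := by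
  have h4 : (0:ℝ) < 4 + κ := by linarith
  have hκinv : (0:ℝ) < κ⁻¹ := inv_pos.2 hκ
  set t := Real.log κ⁻¹ with htdef
  have ht : 30 ≤ t := (Real.le_log_iff_exp_le hκinv).2 hκ'
  have ht0 : 0 < t := by linarith
  have hκt : κ = Real.exp (-t) := by
    rw [Real.exp_neg, htdef, Real.exp_log hκinv, inv_inv]
  have hexp_t : Real.exp t = κ⁻¹ := Real.exp_log hκinv
  have h12 := twelve_sq_le_exp ht
  set l := κ * t with hldef
  have hl0 : 0 ≤ l := by positivity
  have h12κ : 12 * κ * t ^ 2 ≤ 1 := by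
    have h' : 12 * t ^ 2 ≤ κ⁻¹ := by rw [← hexp_t]; exact h12
    calc 12 * κ * t ^ 2 = κ * (12 * t ^ 2) := by ring
      _ ≤ κ * κ⁻¹ := mul_le_mul_of_nonneg_left h' hκ.le
      _ = 1 := mul_inv_cancel₀ (ne_of_gt hκ)
  have hl2 : 12 * l ^ 2 ≤ κ := by
    have h' : κ * (12 * κ * t ^ 2) ≤ κ * 1 := mul_le_mul_of_nonneg_left h12κ hκ.le
    calc 12 * l ^ 2 = κ * (12 * κ * t ^ 2) := by rw [hldef]; ring
      _ ≤ κ * 1 := h'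
      _ = κ := mul_one κ
  have hlhalf : l ≤ 1/2 := by
    rw [hldef]
    nlinarith [mul_nonneg hκ.le ht0.le, hκ.le]
  set B := 2 * Real.exp l + 2 * Real.exp (-l) with hBdef
  have hcosh := cosh_bound hl0 hlhalf
  have hB : B ≤ 4 + κ / 2 := by
    rw [hBdef]; nlinarith [hl2]
  have hB0 : 0 < B := by positivity
  set r := B * (1 / (4 + κ)) with hrdef
  have hr0 : 0 ≤ r := by positivity
  have hκ1 : κ ≤ 1 := by
    have h1 : (1:ℝ) ≤ κ⁻¹ := le_trans (show _ ≤ Real.exp 30 by linarith [Real.add_one_le_exp (30:ℝ)]) hκ'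
    calc κ = (κ⁻¹)⁻¹ := (inv_inv κ).symm
      _ ≤ 1⁻¹ := inv_anti₀ one_pos h1
      _ = 1 := inv_one
  have h1r : κ / 10 ≤ 1 - r := by
    have hr_le : r ≤ (4 + κ/2) * (1 / (4 + κ)) := by
      rw [hrdef]
      exact mul_le_mul_of_nonneg_right hB (by positivity)
    have h' : (4 + κ/2) * (1 / (4 + κ)) ≤ 1 - κ/10 := by
      rw [← div_eq_mul_one_div, div_le_iff₀ h4]; nlinarith
    linarith
  have hr1 : r < 1 := by nlinarith [h1r, hκ]
  have hNκ : 2 ≤ κ * (gnorm x : ℝ) := by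
    calc (2:ℝ) = κ * (2 * κ⁻¹) := by field_simp
      _ ≤ κ * (gnorm x : ℝ) := mul_le_mul_of_nonneg_left hx hκ.le
  have hlN : 2 * t ≤ l * (gnorm x : ℝ) := by
    calc 2 * t = t * 2 := by ring
      _ ≤ t * (κ * (gnorm x : ℝ)) := mul_le_mul_of_nonneg_left hNκ ht0.le
      _ = l * (gnorm x : ℝ) := by rw [hldef]; ring
  have hexpN : Real.exp (-(l * (gnorm x : ℝ))) ≤ κ ^ 2 := by
    have h1 : Real.exp (-(l * (gnorm x : ℝ))) ≤ Real.exp (-(2*t)) :=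
      Real.exp_le_exp.2 (by linarith)
    have h2 : Real.exp (-(2*t)) = κ ^ 2 := by
      rw [hκt, sq, ← Real.exp_add]; ring_nf
    linarith
  have hsum2 : Summable (fun n : ℕ => Real.exp (-(l * (gnorm x : ℝ))) * r ^ n) :=
    (summable_geometric_of_lt_one hr0 hr1).mul_left _
  have hGx : G κ x ≤ Real.exp (-(l * (gnorm x : ℝ))) * (1 - r)⁻¹ := by
    have hterm : ∀ n : ℕ, (1/(4+κ))^n * (W n x : ℝ) ≤
        Real.exp (-(l * (gnorm x : ℝ))) * r ^ n := by
      intro n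
      calc (1/(4+κ))^n * (W n x : ℝ)
          ≤ (1/(4+κ))^n * (Real.exp (-(l * (gnorm x : ℝ))) * B ^ n) :=
            mul_le_mul_of_nonneg_left (W_le_bound n x l) (by positivity)
        _ = Real.exp (-(l * (gnorm x : ℝ))) * r ^ n := by rw [hrdef, mul_pow]; ring
    calc G κ x ≤ ∑' n : ℕ, Real.exp (-(l * (gnorm x : ℝ))) * r ^ n :=
        Summable.tsum_le_tsum hterm (summableG hκ x) hsum2
      _ = Real.exp (-(l * (gnorm x : ℝ))) * ∑' n : ℕ, r ^ n := tsum_mul_left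
      _ = Real.exp (-(l * (gnorm x : ℝ))) * (1 - r)⁻¹ := by
          rw [tsum_geometric_of_lt_one hr0 hr1]
  have hinvr : (1 - r)⁻¹ ≤ 10 / κ := by
    have h10 : (0:ℝ) < κ / 10 := by positivity
    calc (1 - r)⁻¹ ≤ (κ / 10)⁻¹ := inv_anti₀ h10 h1r
      _ = 10 / κ := by rw [inv_div]
  have hGx2 : G κ x ≤ 10 * κ := by
    have h1rpos : (0:ℝ) < 1 - r := by linarith
    calc G κ x ≤ Real.exp (-(l * (gnorm x : ℝ))) * (1 - r)⁻¹ := hGx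
      _ ≤ κ ^ 2 * (10 / κ) :=
          mul_le_mul hexpN hinvr (by positivity) (by positivity)
      _ = 10 * κ := by field_simp
  have hGoo : 1 ≤ G κ (0, 0) := by
    have hs := summableG hκ ((0, 0) : ℤ × ℤ)
    have h0 := Summable.le_tsum hs 0 (fun n _ => by positivity)
    have h1 : (1/(4+κ))^(0:ℕ) * (W 0 ((0,0) : ℤ × ℤ) : ℝ) = 1 := by
      rw [W_zero]; norm_num
    rw [h1] at h0
    exact h0
  have hκsmall : κ ≤ 1/31 := by
    have h31 : (31:ℝ) ≤ κ⁻¹ := le_trans (show _ ≤ Real.exp 30 by linarith [Real.add_one_le_exp (30:ℝ)]) hκ'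
    calc κ = (κ⁻¹)⁻¹ := (inv_inv κ).symm
      _ ≤ 31⁻¹ := inv_anti₀ (by norm_num) h31
      _ = 1/31 := by norm_num
  have : G κ x ≤ 1/2 := by linarith
  linarith
end

section
/- There exists M such that for every x ∈ ℤ² with |x| ≥ M and every killing rate κ > 0, Σ_{n=⌊|x|²/(2 log |x|)⌋+1}^{|x|²} (4+κ)^{−n} W_n^{o,x} ≤ 2·(1 − κ/(4+κ))^{|x|²/(2 log |x|)}. -/
open scoped Real

open Finset Real

/-! In the diagonal coordinates `x₁ + x₂`, `x₁ - x₂` a unit step of `ℤ²` is a pair of `±1` steps,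
so a walk is determined by the two sets of steps on which these coordinates increase; hence
`W_n^{o,x} ≤ C(n,j) C(n,k)` with `2j - n = x₁ + x₂`, `2k - n = x₁ - x₂`, and one of `|2j - n|`,
`|2k - n|` equals `|x|`. Comparing consecutive binomial coefficients gives the Gaussian tail
`C(n, ⌈n/2⌉ + j) ≤ C(n, ⌊n/2⌋) e^{-j²/n}`, which with `y e^{-y} ≤ 1/2` becomes
`C(n,k) (|x| - 1)² ≤ 2n C(n, ⌊n/2⌋)`; together with `3n C(n, ⌊n/2⌋)² ≤ 2·4ⁿ` this yields
`(|x| - 1)² W_n^{o,x} ≤ (4/3) 4ⁿ`. So every term of the sum is at most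
`(1 - κ/(4+κ))^{|x|²/(2 log |x|)} · 4/(3(|x| - 1)²)`, and the at most `|x|²` terms add up to at
most twice the power as soon as `|x| ≥ 6`. -/

lemma Fin.sum_univ_succ_sub_castSucc {M : Type*} [AddCommGroup M] (n : ℕ) (v : Fin (n + 1) → M) :
    ∑ i : Fin n, (v i.succ - v i.castSucc) = v (Fin.last n) - v 0 := by
  induction n with
  | zero => simp
  | succ n ih =>
    rw [Fin.sum_univ_castSucc]
    simp only [Fin.succ_castSucc]
    rw [ih fun i => v i.castSucc, Fin.castSucc_zero, Fin.succ_last]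
    abel

lemma sum_eq_two_mul_card_filter_pos_sub {ι : Type*} (s : Finset ι) (f : ι → ℤ)
    (hf : ∀ i ∈ s, f i = 1 ∨ f i = -1) :
    ∑ i ∈ s, f i = 2 * #{i ∈ s | 0 < f i} - #s := by
  induction s using Finset.cons_induction with
  | empty => simp
  | cons a s ha ih =>
    rw [sum_cons, filter_cons, card_cons, ih fun i hi => hf i (mem_cons_of_mem hi)]
    rcases hf a (mem_cons_self a s) with h | h <;> simp [h] <;> ring

lemma Nat.centralBinom_sq_mul_le (m : ℕ) : m.centralBinom ^ 2 * (3 * m + 1) ≤ 16 ^ m := by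
  induction m with
  | zero => simp
  | succ m ih =>
    have hrec := Nat.succ_mul_centralBinom_succ m
    refine Nat.le_of_mul_le_mul_left (c := (m + 1) ^ 2 * (3 * m + 1)) ?_ (by positivity)
    calc (m + 1) ^ 2 * (3 * m + 1) * ((m + 1).centralBinom ^ 2 * (3 * (m + 1) + 1))
        = 4 * (2 * m + 1) ^ 2 * (3 * m + 4) * (m.centralBinom ^ 2 * (3 * m + 1)) := by
          rw [show (m + 1) ^ 2 * (3 * m + 1) * ((m + 1).centralBinom ^ 2 * (3 * (m + 1) + 1))
            = ((m + 1) * (m + 1).centralBinom) ^ 2 * ((3 * m + 1) * (3 * m + 4)) by ring, hrec]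
          ring
      _ ≤ 4 * (2 * m + 1) ^ 2 * (3 * m + 4) * 16 ^ m := Nat.mul_le_mul_left _ ih
      _ ≤ 16 * (m + 1) ^ 2 * (3 * m + 1) * 16 ^ m := Nat.mul_le_mul_right _ (by nlinarith)
      _ = (m + 1) ^ 2 * (3 * m + 1) * 16 ^ (m + 1) := by ring

lemma Nat.three_mul_mul_choose_half_sq_le (n : ℕ) : 3 * n * n.choose (n / 2) ^ 2 ≤ 2 * 4 ^ n := by
  obtain ⟨m, rfl | rfl⟩ := Nat.even_or_odd' n
  · have h := Nat.centralBinom_sq_mul_le m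
    rw [Nat.mul_div_cancel_left m two_pos, ← Nat.centralBinom_eq_two_mul_choose, pow_mul]
    norm_num
    nlinarith
  · have h := Nat.centralBinom_sq_mul_le (m + 1)
    have hsucc : (m + 1).centralBinom = 2 * (2 * m + 1).choose m := by
      rw [Nat.centralBinom_eq_two_mul_choose, show 2 * (m + 1) = 2 * m + 1 + 1 by ring,
        Nat.choose_succ_succ, Nat.choose_symm_half]
      ring
    rw [show (2 * m + 1) / 2 = m by omega, show 4 ^ (2 * m + 1) = 4 * 16 ^ m by
      rw [pow_succ, pow_mul]; ring]
    rw [hsucc, mul_pow, pow_succ 16 m] at h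
    nlinarith [Nat.mul_le_mul_right ((2 * m + 1).choose m ^ 2)
      (show 3 * (2 * m + 1) ≤ 2 * (3 * m + 4) by omega)]

lemma Nat.choose_half_add_succ_le_mul_exp (n j : ℕ) :
    (n.choose ((n + 1) / 2 + j + 1) : ℝ) ≤
      n.choose ((n + 1) / 2 + j) * exp (-(2 * j + 1) / n) := by
  set k := (n + 1) / 2 + j with hk
  rcases le_or_gt n k with hnk | hkn
  · rw [Nat.choose_eq_zero_of_lt (by omega), Nat.cast_zero]
    positivity
  have hn : (0 : ℝ) < n := by exact_mod_cast (show 0 < n by omega)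
  have hrec : (n.choose (k + 1) : ℝ) * (k + 1) = n.choose k * (n - k) := by
    have := congrArg (Nat.cast : ℕ → ℝ) (Nat.choose_succ_right_eq n k)
    push_cast [Nat.cast_sub hkn.le] at this
    exact this
  -- i.e. `n (n - k) ≤ (k + 1) (n - 2j - 1)`, which holds since `n + 2j ≤ 2k` and `k < n`
  have hratio : ((n : ℝ) - k) ≤ (k + 1) * (1 - (2 * j + 1) / n) := by
    have h₁ : (n : ℝ) ≤ 2 * ((n + 1) / 2 : ℕ) := by
      exact_mod_cast (show n ≤ 2 * ((n + 1) / 2) by omega)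
    have h₂ : (2 * ((n + 1) / 2 : ℕ) : ℝ) ≤ n + 1 := by
      exact_mod_cast (show 2 * ((n + 1) / 2) ≤ n + 1 by omega)
    have h₃ : (k : ℝ) + 1 ≤ n := by exact_mod_cast hkn
    rw [hk, Nat.cast_add] at h₃ ⊢
    rw [mul_sub, mul_one, mul_div_assoc', le_sub_iff_add_le, ← le_sub_iff_add_le', div_le_iff₀ hn]
    nlinarith [mul_nonneg (Nat.cast_nonneg j : (0 : ℝ) ≤ j) (sub_nonneg.2 h₃)]
  calc (n.choose (k + 1) : ℝ) = n.choose k * (n - k) / (k + 1) := by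
        rw [← hrec, mul_div_cancel_right₀ _ (by positivity)]
    _ ≤ n.choose k * (1 - (2 * j + 1) / n) := by
        rw [mul_div_assoc]
        gcongr
        rwa [div_le_iff₀ (by positivity), mul_comm]
    _ ≤ n.choose k * exp (-(2 * j + 1) / n) := by
        gcongr
        linarith [Real.add_one_le_exp (-(2 * j + 1) / n), neg_div (n : ℝ) (2 * j + 1)]

lemma Nat.choose_half_add_le_mul_exp (n j : ℕ) :
    (n.choose ((n + 1) / 2 + j) : ℝ) ≤ n.choose (n / 2) * exp (-(j : ℝ) ^ 2 / n) := by
  induction j with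
  | zero => simp [Nat.choose_symm_of_eq_add (show n = (n + 1) / 2 + n / 2 by omega)]
  | succ j ih =>
    calc (n.choose ((n + 1) / 2 + (j + 1)) : ℝ)
        ≤ n.choose ((n + 1) / 2 + j) * exp (-(2 * j + 1) / n) :=
          Nat.choose_half_add_succ_le_mul_exp n j
      _ ≤ n.choose (n / 2) * exp (-(j : ℝ) ^ 2 / n) * exp (-(2 * j + 1) / n) := by gcongr
      _ = n.choose (n / 2) * exp (-((j + 1 : ℕ) : ℝ) ^ 2 / n) := by
          rw [mul_assoc, ← Real.exp_add]
          push_cast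
          ring_nf

lemma Nat.choose_mul_sq_sub_one_le (n k w : ℕ) (hn : 0 < n) (hw : 1 ≤ w)
    (hk : |2 * (k : ℤ) - n| = w) :
    (n.choose k : ℝ) * ((w : ℝ) - 1) ^ 2 ≤ 2 * n * n.choose (n / 2) := by
  obtain ⟨j, hj, hkj⟩ : ∃ j : ℕ, w ≤ 2 * j + 1 ∧ n.choose k = n.choose ((n + 1) / 2 + j) := by
    rcases abs_cases (2 * (k : ℤ) - n) with ⟨h, _⟩ | ⟨h, _⟩
    · exact ⟨k - (n + 1) / 2, by omega, by congr 1; omega⟩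
    · exact ⟨n - k - (n + 1) / 2, by omega, Nat.choose_symm_of_eq_add (by omega)⟩
  have hnR : (0 : ℝ) < n := by exact_mod_cast hn
  set y : ℝ := (j : ℝ) ^ 2 / n
  have hwj : ((w : ℝ) - 1) ^ 2 ≤ 4 * n * y := by
    have : (w : ℝ) - 1 ≤ 2 * j := by
      rw [sub_le_iff_le_add]; exact_mod_cast hj
    rw [mul_assoc, mul_div_cancel₀ _ hnR.ne']
    nlinarith [show (0 : ℝ) ≤ w - 1 by rw [sub_nonneg]; exact_mod_cast hw]
  have hy : y * exp (-y) ≤ 1 / 2 :=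
    (Real.mul_exp_neg_le_exp_neg_one y).trans Real.exp_neg_one_lt_half.le
  calc (n.choose k : ℝ) * ((w : ℝ) - 1) ^ 2
      ≤ (n.choose (n / 2) * exp (-y)) * (4 * n * y) := by
        rw [hkj, neg_div']
        gcongr
        · exact Nat.choose_half_add_le_mul_exp n j
      _ = 4 * n * n.choose (n / 2) * (y * exp (-y)) := by ring
      _ ≤ 4 * n * n.choose (n / 2) * (1 / 2) := by gcongr
      _ = 2 * n * n.choose (n / 2) := by ring

section Walks

variable {n : ℕ} {x : ℤ × ℤ}

def walks (n : ℕ) (x : ℤ × ℤ) : Set (Fin (n + 1) → ℤ × ℤ) :=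
  {v | v 0 = (0, 0) ∧ v (Fin.last n) = x ∧ ∀ i : Fin n, gnorm (v i.succ - v i.castSucc) = 1}

lemma W_eq_ncard_walks (n : ℕ) (x : ℤ × ℤ) : W n x = (walks n x).ncard := rfl

def diagAdd : ℤ × ℤ →+ ℤ := AddMonoidHom.fst ℤ ℤ + AddMonoidHom.snd ℤ ℤ

def diagSub : ℤ × ℤ →+ ℤ := AddMonoidHom.fst ℤ ℤ - AddMonoidHom.snd ℤ ℤ

@[simp] lemma diagAdd_apply (e : ℤ × ℤ) : diagAdd e = e.1 + e.2 := rfl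

@[simp] lemma diagSub_apply (e : ℤ × ℤ) : diagSub e = e.1 - e.2 := rfl

lemma eq_of_gnorm_eq_one_of_pos_diag_iff {e e' : ℤ × ℤ} (he : gnorm e = 1) (he' : gnorm e' = 1)
    (hadd : 0 < diagAdd e ↔ 0 < diagAdd e') (hsub : 0 < diagSub e ↔ 0 < diagSub e') : e = e' := by
  obtain ⟨a, b⟩ := e
  obtain ⟨c, d⟩ := e'
  simp only [gnorm, diagAdd_apply, diagSub_apply] at he he' hadd hsub
  ext <;> simp only <;> omega

def ascents (φ : ℤ × ℤ →+ ℤ) (v : Fin (n + 1) → ℤ × ℤ) : Finset (Fin n) :=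
  univ.filter fun i => 0 < φ (v i.succ - v i.castSucc)

lemma two_mul_card_ascents {φ : ℤ × ℤ →+ ℤ} (hφ : ∀ e, gnorm e = 1 → φ e = 1 ∨ φ e = -1)
    {v : Fin (n + 1) → ℤ × ℤ} (hv : v ∈ walks n x) :
    2 * (#(ascents φ v) : ℤ) = n + φ x := by
  have h := sum_eq_two_mul_card_filter_pos_sub univ
    (fun i : Fin n => φ (v i.succ - v i.castSucc)) fun i _ => hφ _ (hv.2.2 i)
  rw [← map_sum, Fin.sum_univ_succ_sub_castSucc, hv.1, hv.2.1, card_univ, Fintype.card_fin] at h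
  simp only [Prod.mk_zero_zero, sub_zero] at h
  rw [ascents]
  omega

lemma diagAdd_of_gnorm_eq_one {e : ℤ × ℤ} (he : gnorm e = 1) :
    diagAdd e = 1 ∨ diagAdd e = -1 := by
  simp only [gnorm] at he; simp only [diagAdd_apply]; omega

lemma diagSub_of_gnorm_eq_one {e : ℤ × ℤ} (he : gnorm e = 1) :
    diagSub e = 1 ∨ diagSub e = -1 := by
  simp only [gnorm] at he; simp only [diagSub_apply]; omega

lemma injOn_ascents_diagAdd_diagSub :
    Set.InjOn (fun v => (ascents diagAdd v, ascents diagSub v)) (walks n x) := by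
  intro v hv w hw hvw
  simp only [Prod.mk.injEq, Finset.ext_iff, ascents, Finset.mem_filter_univ] at hvw
  have hstep : ∀ i : Fin n, v i.succ - v i.castSucc = w i.succ - w i.castSucc := fun i =>
    eq_of_gnorm_eq_one_of_pos_diag_iff (hv.2.2 i) (hw.2.2 i) (hvw.1 i) (hvw.2 i)
  funext i
  induction i using Fin.induction with
  | zero => rw [hv.1, hw.1]
  | succ i ih => rw [← sub_add_cancel (v i.succ) (v i.castSucc), hstep i, ih, sub_add_cancel]

lemma exists_W_le_choose_mul_choose (h : W n x ≠ 0) :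
    ∃ j k : ℕ, 2 * (j : ℤ) - n = x.1 + x.2 ∧ 2 * (k : ℤ) - n = x.1 - x.2 ∧
      W n x ≤ n.choose j * n.choose k := by
  rw [W_eq_ncard_walks] at h ⊢
  obtain ⟨v, hv⟩ := Set.nonempty_of_ncard_ne_zero h
  refine ⟨#(ascents diagAdd v), #(ascents diagSub v),
    by linarith [two_mul_card_ascents (fun _ => diagAdd_of_gnorm_eq_one) hv, diagAdd_apply x],
    by linarith [two_mul_card_ascents (fun _ => diagSub_of_gnorm_eq_one) hv, diagSub_apply x], ?_⟩
  have hmaps : ∀ w ∈ walks n x, (ascents diagAdd w, ascents diagSub w) ∈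
      ((powersetCard #(ascents diagAdd v) univ ×ˢ powersetCard #(ascents diagSub v) univ :
        Finset (Finset (Fin n) × Finset (Fin n))) : Set _) := by
    intro w hw
    have h₁ := two_mul_card_ascents (fun _ => diagAdd_of_gnorm_eq_one) hw
    have h₂ := two_mul_card_ascents (fun _ => diagSub_of_gnorm_eq_one) hw
    have h₃ := two_mul_card_ascents (fun _ => diagAdd_of_gnorm_eq_one) hv
    have h₄ := two_mul_card_ascents (fun _ => diagSub_of_gnorm_eq_one) hv
    simp only [coe_product, Set.mem_prod, mem_coe, mem_powersetCard, subset_univ, true_and]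
    omega
  calc W n x ≤ _ :=
        Set.ncard_le_ncard_of_injOn _ hmaps injOn_ascents_diagAdd_diagSub (finite_toSet _)
    _ = n.choose _ * n.choose _ := by simp

end Walks

lemma gnorm_eq_abs_add_or_abs_sub (x : ℤ × ℤ) :
    (gnorm x : ℤ) = |x.1 + x.2| ∨ (gnorm x : ℤ) = |x.1 - x.2| := by
  simp only [gnorm]
  rcases abs_cases (x.1 + x.2) with ⟨h₁, _⟩ | ⟨h₁, _⟩ <;>
    rcases abs_cases (x.1 - x.2) with ⟨h₂, _⟩ | ⟨h₂, _⟩ <;> omega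

lemma sq_mul_W_le {n : ℕ} {x : ℤ × ℤ} (hn : 0 < n) (hx : 1 ≤ gnorm x) :
    ((gnorm x : ℝ) - 1) ^ 2 * W n x ≤ 4 / 3 * 4 ^ n := by
  rcases eq_or_ne (W n x) 0 with h | h
  · rw [h, Nat.cast_zero, mul_zero]; positivity
  obtain ⟨j, k, hj, hk, hW⟩ := exists_W_le_choose_mul_choose h
  have hmid : ∀ i, (n.choose i : ℝ) ≤ n.choose (n / 2) := fun i =>
    mod_cast Nat.choose_le_middle i n
  have hprod : (n.choose j * n.choose k : ℝ) * ((gnorm x : ℝ) - 1) ^ 2 ≤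
      2 * n * n.choose (n / 2) ^ 2 := by
    rcases gnorm_eq_abs_add_or_abs_sub x with hg | hg
    · have := Nat.choose_mul_sq_sub_one_le n j (gnorm x) hn hx (by rw [hj, hg])
      nlinarith [mul_le_mul this (hmid k) (by positivity) (by positivity)]
    · have := Nat.choose_mul_sq_sub_one_le n k (gnorm x) hn hx (by rw [hk, hg])
      nlinarith [mul_le_mul this (hmid j) (by positivity) (by positivity)]
  have hcentral : (3 * n * n.choose (n / 2) ^ 2 : ℝ) ≤ 2 * 4 ^ n :=
    mod_cast Nat.three_mul_mul_choose_half_sq_le n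
  calc ((gnorm x : ℝ) - 1) ^ 2 * W n x
      ≤ (n.choose j * n.choose k : ℝ) * ((gnorm x : ℝ) - 1) ^ 2 := by
        rw [mul_comm]; gcongr; exact_mod_cast hW
    _ ≤ 4 / 3 * 4 ^ n := by linarith

lemma one_div_pow_mul_W_le {κ t : ℝ} (hκ : 0 ≤ κ) {n : ℕ} (hn : 0 < n) (htn : t ≤ n)
    {x : ℤ × ℤ} (hx : 1 < gnorm x) :
    (1 / (4 + κ)) ^ n * W n x ≤ (1 - κ / (4 + κ)) ^ t * (4 / 3 / ((gnorm x : ℝ) - 1) ^ 2) := by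
  have hr : 1 - κ / (4 + κ) = 4 / (4 + κ) := by field_simp; ring
  have hr₀ : 0 < 4 / (4 + κ) := by positivity
  have hr₁ : 4 / (4 + κ) ≤ 1 := by rw [div_le_one (by positivity)]; linarith
  have hpow : (4 / (4 + κ)) ^ n ≤ (4 / (4 + κ)) ^ t := by
    rw [← Real.rpow_natCast]; exact Real.rpow_le_rpow_of_exponent_ge hr₀ hr₁ htn
  have hg : (0 : ℝ) < ((gnorm x : ℝ) - 1) ^ 2 := by
    have : (1 : ℝ) < gnorm x := by exact_mod_cast hx
    positivity
  have hW : (W n x : ℝ) / 4 ^ n ≤ 4 / 3 / ((gnorm x : ℝ) - 1) ^ 2 := by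
    rw [div_le_div_iff₀ (by positivity) hg]
    linarith [sq_mul_W_le hn hx.le]
  calc (1 / (4 + κ)) ^ n * W n x = (4 / (4 + κ)) ^ n * (W n x / 4 ^ n) := by
        rw [div_pow, div_pow, one_pow]; field_simp
    _ ≤ (1 - κ / (4 + κ)) ^ t * (4 / 3 / ((gnorm x : ℝ) - 1) ^ 2) := by
        rw [hr]; gcongr

lemma sum_Icc_one_div_pow_mul_W_le {κ t : ℝ} (hκ : 0 ≤ κ) {m : ℕ} (htm : t ≤ m + 1)
    {x : ℤ × ℤ} (hx : 6 ≤ gnorm x) :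
    ∑ n ∈ Icc (m + 1) (gnorm x ^ 2), (1 / (4 + κ)) ^ n * (W n x : ℝ) ≤
      2 * (1 - κ / (4 + κ)) ^ t := by
  set g := gnorm x
  set B : ℝ := 4 / 3 / ((g : ℝ) - 1) ^ 2
  have hg : (6 : ℝ) ≤ g := by exact_mod_cast hx
  have hterm : ∀ n ∈ Icc (m + 1) (g ^ 2), (1 / (4 + κ)) ^ n * (W n x : ℝ) ≤
      (1 - κ / (4 + κ)) ^ t * B := by
    intro n hn
    have hn := (mem_Icc.1 hn).1
    exact one_div_pow_mul_W_le hκ (by omega) (htm.trans (by exact_mod_cast hn)) (by omega)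
  have hcard : (#(Icc (m + 1) (g ^ 2)) : ℝ) ≤ g ^ 2 := by
    rw [Nat.card_Icc]; exact_mod_cast (by omega)
  have hr : 0 ≤ (1 - κ / (4 + κ)) ^ t :=
    Real.rpow_nonneg (by rw [sub_nonneg, div_le_one (by linarith)]; linarith) t
  have hB : (g : ℝ) ^ 2 * B ≤ 2 := by
    rw [mul_div_assoc', div_le_iff₀ (by nlinarith)]
    nlinarith
  calc ∑ n ∈ Icc (m + 1) (g ^ 2), (1 / (4 + κ)) ^ n * (W n x : ℝ)
      ≤ #(Icc (m + 1) (g ^ 2)) * ((1 - κ / (4 + κ)) ^ t * B) := by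
        rw [← nsmul_eq_mul]; exact sum_le_card_nsmul _ _ _ hterm
    _ ≤ g ^ 2 * ((1 - κ / (4 + κ)) ^ t * B) := by gcongr
    _ = (1 - κ / (4 + κ)) ^ t * (g ^ 2 * B) := by ring
    _ ≤ (1 - κ / (4 + κ)) ^ t * 2 := by gcongr
    _ = 2 * (1 - κ / (4 + κ)) ^ t := mul_comm _ _

/-- Lemma 3.6, eq. (3.16): contribution of walks of length between
`|x|²/(2 log |x|)` and `|x|²`. -/
theorem stmt11 :
    ∃ M : ℕ, ∀ x : ℤ × ℤ, M ≤ gnorm x → ∀ κ : ℝ, 0 < κ →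
      (∑ n ∈ Finset.Icc (⌊(gnorm x : ℝ) ^ 2 / (2 * Real.log (gnorm x))⌋₊ + 1) (gnorm x ^ 2),
        (1 / (4 + κ)) ^ n * (W n x : ℝ))
      ≤ 2 * (1 - κ / (4 + κ)) ^ ((gnorm x : ℝ) ^ 2 / (2 * Real.log (gnorm x))) :=
  ⟨6, fun _ hx _ hκ => sum_Icc_one_div_pow_mul_W_le hκ.le (Nat.lt_floor_add_one _).le hx⟩
end
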